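/- arXiv:2502.16227 — 6 statements merged into one kernel-verified Lean document; each statement's English description precedes it below -/
import Mathlib

section
/- If G is a vertex-transitive graph on n vertices and ϑ denotes the Lovász theta number, then ϑ(G)·ϑ(Ḡ) = n, where Ḡ is the complement graph. -/
open scoped BigOperators

noncomputable def lovaszTheta {n : ℕ} (G : SimpleGraph (Fin n)) : ℝ :=
  sSup {t : ℝ | ∃ X : Matrix (Fin n) (Fin n) ℝ, X.PosSemidef ∧ X.trace = 1 ∧
    (∀ i j, G.Adj i j → X i j = 0) ∧ t = ∑ i, ∑ j, X i j}

namespace LovaszThetaAux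

open Matrix

variable {n : ℕ}

abbrev Mat (n : ℕ) := Matrix (Fin n) (Fin n) ℝ

def Feas (G : SimpleGraph (Fin n)) (X : Mat n) : Prop :=
  X.PosSemidef ∧ X.trace = 1 ∧ ∀ i j, G.Adj i j → X i j = 0

def tval (X : Mat n) : ℝ := ∑ i, ∑ j, X i j

def ThetaSet (G : SimpleGraph (Fin n)) : Set ℝ :=
  {t : ℝ | ∃ X : Matrix (Fin n) (Fin n) ℝ, X.PosSemidef ∧ X.trace = 1 ∧
    (∀ i j, G.Adj i j → X i j = 0) ∧ t = ∑ i, ∑ j, X i j}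

def KSet (n : ℕ) : Set (Mat n) := {X | X.PosSemidef ∧ X.trace = 1}

def Jm (n : ℕ) : Mat n := Matrix.of fun _ _ => (1 : ℝ)

lemma lovaszTheta_eq (G : SimpleGraph (Fin n)) : lovaszTheta G = sSup (ThetaSet G) := rfl

lemma quadform_eq (X : Mat n) (x : Fin n → ℝ) :
    x ⬝ᵥ (X *ᵥ x) = ∑ i, ∑ j, x i * X i j * x j := by
  simp [dotProduct, Matrix.mulVec, dotProduct, Finset.mul_sum, mul_assoc]

lemma psd_quad {X : Mat n} (hX : X.PosSemidef) (x : Fin n → ℝ) :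
    0 ≤ ∑ i, ∑ j, x i * X i j * x j := by
  have := hX.dotProduct_mulVec_nonneg x
  rwa [star_trivial, quadform_eq] at this

lemma psd_diag_nonneg {X : Mat n} (hX : X.PosSemidef) (i : Fin n) : 0 ≤ X i i := by
  have := psd_quad hX (Pi.single i 1)
  simpa [Pi.single_apply, Finset.sum_ite_eq', Finset.sum_ite_eq] using this

lemma symm_apply {X : Mat n} (hX : X.IsHermitian) (i j : Fin n) : X i j = X j i := by
  have := congrFun (congrFun hX j) i
  simp only [Matrix.conjTranspose_apply, star_trivial] at this; exact this

lemma herm_iff {X : Mat n} : X.IsHermitian ↔ ∀ i j, X i j = X j i := by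
  constructor
  · exact fun h i j => symm_apply h i j
  · intro h
    ext i j
    rw [Matrix.conjTranspose_apply, star_trivial]
    exact (h i j).symm

lemma psd_offdiag {X : Mat n} (hX : X.PosSemidef) (i j : Fin n) :
    2 * X i j ≤ X i i + X j j := by
  rcases eq_or_ne i j with rfl | hij
  · nlinarith [psd_diag_nonneg hX i]
  · have hq := hX.dotProduct_mulVec_nonneg (Pi.single i 1 - Pi.single j 1)
    rw [star_trivial] at hq
    have hsym := symm_apply hX.1 i j
    have hc : (Pi.single i 1 - Pi.single j 1) ⬝ᵥ (X *ᵥ (Pi.single i 1 - Pi.single j 1))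
        = X i i - X i j - (X j i - X j j) := by
      simp [Matrix.mulVec_sub, Matrix.mulVec_single, sub_dotProduct, Pi.single_apply,
        dotProduct_sub, Pi.sub_apply]
      linarith
    rw [hc] at hq
    linarith

lemma psd_offdiag' {X : Mat n} (hX : X.PosSemidef) (i j : Fin n) :
    -(2 * X i j) ≤ X i i + X j j := by
  rcases eq_or_ne i j with rfl | hij
  · nlinarith [psd_diag_nonneg hX i]
  · have hq := hX.dotProduct_mulVec_nonneg (Pi.single i 1 + Pi.single j 1)
    rw [star_trivial] at hq
    have hsym := symm_apply hX.1 i j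
    have hc : (Pi.single i 1 + Pi.single j 1) ⬝ᵥ (X *ᵥ (Pi.single i 1 + Pi.single j 1))
        = X i i + X i j + (X j i + X j j) := by
      simp [Matrix.mulVec_add, Matrix.mulVec_single, add_dotProduct, Pi.single_apply,
        dotProduct_add, Pi.add_apply]
      linarith
    rw [hc] at hq
    linarith

lemma tval_le {G : SimpleGraph (Fin n)} {X : Mat n} (hX : Feas G X) : tval X ≤ n := by
  have h1 : tval X ≤ ∑ i : Fin n, ∑ j : Fin n, (X i i + X j j) / 2 := by
    apply Finset.sum_le_sum; intro i _
    apply Finset.sum_le_sum; intro j _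
    nlinarith [psd_offdiag hX.1 i j]
  have h2 : ∑ i : Fin n, ∑ j : Fin n, (X i i + X j j) / 2 = (n : ℝ) * X.trace := by
    have ht : X.trace = ∑ i, X i i := rfl
    rw [ht]
    rw [Finset.mul_sum]
    simp only [← Finset.sum_div, Finset.sum_add_distrib, Finset.sum_const, Finset.card_univ,
      Fintype.card_fin, nsmul_eq_mul, ← Finset.mul_sum]
    ring
  rw [hX.2.1, mul_one] at h2
  linarith [h1, h2.le]

lemma mem_thetaSet_iff {G : SimpleGraph (Fin n)} {t : ℝ} :
    t ∈ ThetaSet G ↔ ∃ X, Feas G X ∧ t = tval X := by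
  constructor
  · rintro ⟨X, a, b, c, d⟩; exact ⟨X, ⟨a, b, c⟩, d⟩
  · rintro ⟨X, ⟨a, b, c⟩, d⟩; exact ⟨X, a, b, c, d⟩

lemma psd_smul {c : ℝ} (hc : 0 ≤ c) {X : Mat n} (hX : X.PosSemidef) : (c • X).PosSemidef := by
  refine Matrix.PosSemidef.of_dotProduct_mulVec_nonneg ?_ ?_
  · unfold Matrix.IsHermitian
    rw [Matrix.conjTranspose_smul, hX.1]
    simp
  · intro x
    have h := hX.dotProduct_mulVec_nonneg x
    rw [Matrix.smul_mulVec, dotProduct_smul]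
    exact mul_nonneg hc h

lemma psd_Jm : (Jm n).PosSemidef := by
  refine Matrix.PosSemidef.of_dotProduct_mulVec_nonneg ?_ ?_
  · unfold Matrix.IsHermitian
    ext i j
    simp [Jm]
  · intro x
    rw [star_trivial, quadform_eq]
    have : ∑ i, ∑ j, x i * (Jm n) i j * x j = (∑ i, x i) * (∑ j, x j) := by
      rw [Finset.sum_mul]
      refine Finset.sum_congr rfl fun i _ => ?_
      rw [Finset.mul_sum]
      refine Finset.sum_congr rfl fun j _ => ?_
      simp [Jm]
    rw [this]
    exact mul_self_nonneg _

lemma trace_Jm : (Jm n).trace = n := by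
  simp [Matrix.trace, Matrix.diag, Jm]

lemma baseFeas (hn : 0 < n) (G : SimpleGraph (Fin n)) :
    Feas G ((n : ℝ)⁻¹ • (1 : Mat n)) ∧ tval ((n : ℝ)⁻¹ • (1 : Mat n)) = 1 := by
  have hn' : (0:ℝ) < n := by exact_mod_cast hn
  refine ⟨⟨psd_smul (by positivity) Matrix.PosSemidef.one, ?_, ?_⟩, ?_⟩
  · rw [Matrix.trace_smul, Matrix.trace_one]
    simp [hn'.ne']
  · intro i j hij
    have : i ≠ j := hij.ne
    simp [Matrix.one_apply, this]
  · unfold tval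
    have : ∀ i : Fin n, ∑ j, ((n : ℝ)⁻¹ • (1 : Mat n)) i j = (n : ℝ)⁻¹ := by
      intro i
      simp only [Matrix.smul_apply, smul_eq_mul, ← Finset.mul_sum]
      rw [Finset.sum_eq_single i]
      · simp
      · intro b _ hb; exact Matrix.one_apply_ne' hb
      · simp
    rw [Finset.sum_congr rfl fun i _ => this i]
    simp [hn'.ne']

lemma one_mem_thetaSet (hn : 0 < n) (G : SimpleGraph (Fin n)) : (1:ℝ) ∈ ThetaSet G := by
  obtain ⟨hF, hv⟩ := baseFeas hn G
  exact mem_thetaSet_iff.2 ⟨_, hF, hv.symm⟩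

lemma thetaSet_bddAbove (G : SimpleGraph (Fin n)) : BddAbove (ThetaSet G) := by
  refine ⟨n, fun t ht => ?_⟩
  obtain ⟨X, hF, rfl⟩ := mem_thetaSet_iff.1 ht
  exact tval_le hF

lemma le_theta {G : SimpleGraph (Fin n)} {t : ℝ} (ht : t ∈ ThetaSet G) : t ≤ lovaszTheta G :=
  le_csSup (thetaSet_bddAbove G) ht

lemma one_le_theta (hn : 0 < n) (G : SimpleGraph (Fin n)) : 1 ≤ lovaszTheta G :=
  le_theta (one_mem_thetaSet hn G)

lemma exists_near (hn : 0 < n) (G : SimpleGraph (Fin n)) {ε : ℝ} (hε : 0 < ε) :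
    ∃ X, Feas G X ∧ lovaszTheta G - ε < tval X := by
  obtain ⟨t, ht, hlt⟩ := exists_lt_of_lt_csSup ⟨1, one_mem_thetaSet hn G⟩
    (show lovaszTheta G - ε < lovaszTheta G by linarith)
  obtain ⟨X, hF, rfl⟩ := mem_thetaSet_iff.1 ht
  exact ⟨X, hF, hlt⟩

lemma averaging (hn : 0 < n) (H : SimpleGraph (Fin n))
    (htr : ∀ u v : Fin n, ∃ σ : Equiv.Perm (Fin n),
      (∀ a b, H.Adj (σ a) (σ b) ↔ H.Adj a b) ∧ σ u = v)
    {X : Mat n} (hX : Feas H X) :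
    ∃ Y : Mat n, Feas H Y ∧ tval Y = tval X ∧
      (∀ i, Y i i = (n : ℝ)⁻¹) ∧ (∀ i, ∑ j, Y i j = tval X / n) := by
  classical
  have hn' : (0:ℝ) < n := by exact_mod_cast hn
  set P : Equiv.Perm (Fin n) → Prop := fun σ => ∀ a b, H.Adj (σ a) (σ b) ↔ H.Adj a b with hP
  set Γ : Finset (Equiv.Perm (Fin n)) := Finset.univ.filter P with hΓ
  have hmem : ∀ {σ : Equiv.Perm (Fin n)}, σ ∈ Γ ↔ P σ := by
    intro σ; simp [hΓ]
  have hone : (1 : Equiv.Perm (Fin n)) ∈ Γ := by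
    rw [hmem]; intro a b; simp
  have hmul : ∀ {σ τ : Equiv.Perm (Fin n)}, σ ∈ Γ → τ ∈ Γ → σ * τ ∈ Γ := by
    intro σ τ hσ hτ
    rw [hmem] at *
    intro a b
    rw [Equiv.Perm.mul_apply, Equiv.Perm.mul_apply, hσ, hτ]
  have hinv : ∀ {τ : Equiv.Perm (Fin n)}, τ ∈ Γ → τ⁻¹ ∈ Γ := by
    intro τ hτ
    rw [hmem] at *
    intro a b
    conv_rhs => rw [← (Equiv.Perm.eq_inv_iff_eq.mp rfl : τ (τ⁻¹ a) = a),
      ← (Equiv.Perm.eq_inv_iff_eq.mp rfl : τ (τ⁻¹ b) = b)]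
    rw [hτ]
  have hcardpos : 0 < Γ.card := Finset.card_pos.2 ⟨1, hone⟩
  have hcard : (0:ℝ) < (Γ.card : ℝ) := by exact_mod_cast hcardpos
  set c : ℝ := ((Γ.card : ℝ))⁻¹ with hc
  set Y : Mat n := c • ∑ σ ∈ Γ, X.submatrix σ σ with hY
  have happly : ∀ i j, Y i j = c * ∑ σ ∈ Γ, X (σ i) (σ j) := by
    intro i j
    rw [hY]
    simp [Matrix.sum_apply, Matrix.submatrix_apply]
  -- PSD
  have hpsd : Y.PosSemidef := by
    refine psd_smul (le_of_lt (by positivity)) ?_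
    refine Finset.sum_induction _ _ (fun a b ha hb => ha.add hb) Matrix.PosSemidef.zero ?_
    intro σ _
    exact hX.1.submatrix σ
  -- trace
  have htrace : Y.trace = 1 := by
    rw [hY, Matrix.trace_smul, Matrix.trace_sum]
    have : ∀ σ ∈ Γ, (X.submatrix σ σ).trace = 1 := by
      intro σ _
      have : (X.submatrix σ σ).trace = ∑ i, X (σ i) (σ i) := by
        simp [Matrix.trace, Matrix.diag]
      rw [this, Equiv.sum_comp σ (fun i => X i i)]
      exact hX.2.1
    rw [Finset.sum_congr rfl this]
    simp [hc, smul_eq_mul, hcard.ne']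
  -- zero on edges
  have hedge : ∀ i j, H.Adj i j → Y i j = 0 := by
    intro i j hij
    rw [happly]
    have : ∀ σ ∈ Γ, X (σ i) (σ j) = 0 := by
      intro σ hσ
      exact hX.2.2 _ _ ((hmem.1 hσ i j).2 hij)
    rw [Finset.sum_congr rfl this]
    simp
  -- total value
  have htv : tval Y = tval X := by
    unfold tval
    have : ∀ i : Fin n, ∑ j, Y i j = c * ∑ σ ∈ Γ, ∑ j, X (σ i) (σ j) := by
      intro i
      rw [Finset.sum_congr rfl (fun j _ => happly i j), ← Finset.mul_sum, Finset.sum_comm]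
    rw [Finset.sum_congr rfl (fun i _ => this i), ← Finset.mul_sum, Finset.sum_comm]
    have : ∀ σ ∈ Γ, ∑ i : Fin n, ∑ j, X (σ i) (σ j) = tval X := by
      intro σ _
      have hin : ∀ i : Fin n, ∑ j, X (σ i) (σ j) = ∑ j, X (σ i) j :=
        fun i => Equiv.sum_comp σ (fun j => X (σ i) j)
      rw [Finset.sum_congr rfl (fun i _ => hin i)]
      exact Equiv.sum_comp σ (fun i => ∑ j, X i j)
    rw [Finset.sum_congr rfl this]
    unfold tval
    rw [Finset.sum_const, nsmul_eq_mul, hc]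
    field_simp
  -- invariance
  have hinvar : ∀ τ ∈ Γ, ∀ i j, Y (τ i) (τ j) = Y i j := by
    intro τ hτ i j
    rw [happly, happly]
    congr 1
    refine Finset.sum_nbij' (fun σ => σ * τ) (fun σ => σ * τ⁻¹) ?_ ?_ ?_ ?_ ?_
    · intro σ hσ; exact hmul hσ hτ
    · intro σ hσ; exact hmul hσ (hinv hτ)
    · intro σ _; group
    · intro σ _; group
    · intro σ _; simp [Equiv.Perm.mul_apply]
  -- diagonal
  have hdiag : ∀ i, Y i i = (n : ℝ)⁻¹ := by
    have heq : ∀ i k : Fin n, Y i i = Y k k := by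
      intro i k
      obtain ⟨σ, hσP, hσik⟩ := htr i k
      have hσΓ : σ ∈ Γ := hmem.2 hσP
      rw [← hσik]
      exact (hinvar σ hσΓ i i).symm
    intro i
    have : Y.trace = (n : ℝ) * Y i i := by
      have : Y.trace = ∑ k, Y k k := rfl
      rw [this, Finset.sum_congr rfl (fun k _ => (heq i k).symm)]
      simp [Finset.sum_const, nsmul_eq_mul]
    rw [htrace] at this
    field_simp at this ⊢
    linarith
  -- row sums
  have hrow : ∀ i, ∑ j, Y i j = tval X / n := by
    have heq : ∀ i k : Fin n, (∑ j, Y i j) = ∑ j, Y k j := by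
      intro i k
      obtain ⟨σ, hσP, hσik⟩ := htr i k
      have hσΓ : σ ∈ Γ := hmem.2 hσP
      calc ∑ j, Y i j = ∑ j, Y (σ i) (σ j) := by
            rw [Finset.sum_congr rfl (fun j _ => hinvar σ hσΓ i j)]
        _ = ∑ j, Y (σ i) j := Equiv.sum_comp σ (fun j => Y (σ i) j)
        _ = ∑ j, Y k j := by rw [hσik]
    intro i
    have : tval Y = (n:ℝ) * ∑ j, Y i j := by
      unfold tval
      rw [Finset.sum_congr rfl (fun k _ => (heq i k).symm)]
      simp [Finset.sum_const, nsmul_eq_mul]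
    rw [htv] at this
    rw [this]
    field_simp
  exact ⟨Y, ⟨hpsd, htrace, hedge⟩, htv, hdiag, hrow⟩

lemma psd_trace_nonneg {A : Mat n} (hA : A.PosSemidef) : 0 ≤ A.trace := by
  have : A.trace = ∑ i, A i i := rfl
  rw [this]
  exact Finset.sum_nonneg fun i _ => psd_diag_nonneg hA i

lemma psd_trace_mul_nonneg {A B : Mat n} (hA : A.PosSemidef) (hB : B.PosSemidef) :
    0 ≤ (A * B).trace := by
  classical
  open scoped MatrixOrder in
  obtain ⟨S, hS⟩ := CStarAlgebra.nonneg_iff_eq_star_mul_self.mp hB.nonneg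
  rw [hS, Matrix.star_eq_conjTranspose, ← Matrix.mul_assoc, Matrix.trace_mul_cycle]
  exact psd_trace_nonneg (hA.mul_mul_conjTranspose_same _)

lemma trace_mul_double (A B : Mat n) : (A * B).trace = ∑ i, ∑ j, A i j * B j i := by
  simp [Matrix.trace, Matrix.diag, Matrix.mul_apply]

lemma cs_bound (hn : 0 < n) (G : SimpleGraph (Fin n)) {X Y : Mat n}
    (hX : Feas G X) (hY : Feas Gᶜ Y)
    (hXd : ∀ i, X i i = (n:ℝ)⁻¹) (hXr : ∀ i, ∑ j, X i j = tval X / n)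
    (hYd : ∀ i, Y i i = (n:ℝ)⁻¹) (hYr : ∀ i, ∑ j, Y i j = tval Y / n) :
    tval X * tval Y ≤ n := by
  classical
  have hn' : (0:ℝ) < n := by exact_mod_cast hn
  set t := tval X with ht
  set s := tval Y with hs
  -- complementary supports
  have hsupp : ∀ i j, i ≠ j → X i j * Y i j = 0 := by
    intro i j hij
    by_cases h : G.Adj i j
    · rw [hX.2.2 i j h, zero_mul]
    · rw [hY.2.2 i j (by simp [SimpleGraph.compl_adj]; exact ⟨hij, h⟩), mul_zero]
  -- basic matrix identities
  have hXJ : X * Jm n = (t/n) • Jm n := by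
    ext i j
    simp only [Matrix.mul_apply, Jm, Matrix.of_apply, mul_one, Matrix.smul_apply, smul_eq_mul]
    rw [hXr i]
  have hYJ : Y * Jm n = (s/n) • Jm n := by
    ext i j
    simp only [Matrix.mul_apply, Jm, Matrix.of_apply, mul_one, Matrix.smul_apply, smul_eq_mul]
    rw [hYr i]
  have hJX : Jm n * X = (t/n) • Jm n := by
    ext i j
    simp only [Matrix.mul_apply, Jm, Matrix.of_apply, one_mul, Matrix.smul_apply, smul_eq_mul]
    rw [Finset.sum_congr rfl (fun k _ => symm_apply hX.1.1 k j), hXr j, mul_one]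
  have hJY : Jm n * Y = (s/n) • Jm n := by
    ext i j
    simp only [Matrix.mul_apply, Jm, Matrix.of_apply, one_mul, Matrix.smul_apply, smul_eq_mul]
    rw [Finset.sum_congr rfl (fun k _ => symm_apply hY.1.1 k j), hYr j, mul_one]
  have hJJ : Jm n * Jm n = (n:ℝ) • Jm n := by
    ext i j
    simp [Matrix.mul_apply, Jm]
  -- trace (X * Y) = 1/n
  have htXY : (X * Y).trace = 1/n := by
    rw [trace_mul_double]
    have : ∀ i : Fin n, ∑ j, X i j * Y j i = (n:ℝ)⁻¹ * (n:ℝ)⁻¹ := by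
      intro i
      rw [Finset.sum_eq_single i]
      · rw [hXd, hYd]
      · intro j _ hj
        rw [symm_apply hY.1.1 j i]
        exact hsupp i j (Ne.symm hj)
      · simp
    rw [Finset.sum_congr rfl (fun i _ => this i)]
    rw [Finset.sum_const, nsmul_eq_mul, Finset.card_univ, Fintype.card_fin]
    field_simp
  -- the quadratic form
  have htJm : (Jm n).trace = (n:ℝ) := trace_Jm
  have key : ∀ lam : ℝ,
      0 ≤ (t*s) * (lam * lam) + (2*(t*s)/n) * lam + 1/n := by
    intro lam
    set A := Jm n with hA
    set W : Mat n := 1 + lam • A with hW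
    have hWherm : Wᴴ = W := by
      rw [hW, Matrix.conjTranspose_add, Matrix.conjTranspose_one,
        Matrix.conjTranspose_smul, star_trivial, psd_Jm.1]
    have hpos : 0 ≤ (W * X * W * Y).trace := by
      have := psd_trace_mul_nonneg (hX.1.mul_mul_conjTranspose_same W) hY.1
      rwa [hWherm] at this
    have e1 : W * X * W = X * W + lam • (A * X * W) := by
      rw [hW, Matrix.add_mul, Matrix.one_mul, Matrix.smul_mul, Matrix.add_mul,
        Matrix.smul_mul]
    have e2 : X * W * Y = X * Y + lam • (X * (A * Y)) := by
      rw [hW, Matrix.mul_add, Matrix.mul_one, Matrix.mul_smul, Matrix.add_mul,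
        Matrix.smul_mul, Matrix.mul_assoc]
    have e3 : X * (A * Y) = ((s/n) * (t/n)) • A := by
      rw [hJY, Matrix.mul_smul, hXJ, smul_smul]
    have e4 : A * X * W = ((t/n) + lam * ((t/n) * n)) • A := by
      rw [hW, Matrix.mul_add, Matrix.mul_one, Matrix.mul_smul, hJX,
        Matrix.smul_mul, hJJ, smul_smul, add_smul, smul_smul, mul_assoc]
    have e5 : A * Y = (s/n) • A := hJY
    have T1 : (X * W * Y).trace = 1/n + lam * (((s/n) * (t/n)) * (n:ℝ)) := by
      rw [e2, Matrix.trace_add, htXY, Matrix.trace_smul, e3, Matrix.trace_smul, htJm]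
      simp [smul_eq_mul]
    have T2 : (A * X * W * Y).trace = ((t/n) + lam*((t/n)*(n:ℝ))) * ((s/n) * (n:ℝ)) := by
      rw [e4, Matrix.smul_mul, Matrix.trace_smul, e5, Matrix.trace_smul, htJm]
      simp [smul_eq_mul]
    have etr : (W * X * W * Y).trace
        = 1/n + lam * (((s/n) * (t/n)) * (n:ℝ))
          + lam * (((t/n) + lam*((t/n)*(n:ℝ))) * ((s/n) * (n:ℝ))) := by
      rw [e1, Matrix.add_mul, Matrix.smul_mul, Matrix.trace_add, Matrix.trace_smul, T1, T2]
      simp [smul_eq_mul]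
    rw [etr] at hpos
    have heq : 1/(n:ℝ) + lam * (((s/n) * (t/n)) * (n:ℝ))
          + lam * (((t/n) + lam*((t/n)*(n:ℝ))) * ((s/n) * (n:ℝ)))
        = (t*s) * (lam * lam) + (2*(t*s)/n) * lam + 1/n := by
      field_simp
      ring
    linarith [hpos, heq.ge, heq.le]
  have hk := key (-(1/n))
  field_simp at hk
  nlinarith [hk, hn']

lemma KSet_convex : Convex ℝ (KSet n) := by
  intro X hX Y hY a b ha hb hab
  refine ⟨(psd_smul ha hX.1).add (psd_smul hb hY.1), ?_⟩
  rw [Matrix.trace_add, Matrix.trace_smul, Matrix.trace_smul, hX.2, hY.2]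
  simp [hab]

lemma KSet_isClosed : IsClosed (KSet n) := by
  have h1 : IsClosed {X : Mat n | X.IsHermitian} := by
    have : {X : Mat n | X.IsHermitian} = ⋂ i, ⋂ j, {X : Mat n | X i j = X j i} := by
      ext X
      simp only [Set.mem_setOf_eq, Set.mem_iInter, herm_iff]
    rw [this]
    exact isClosed_iInter fun i => isClosed_iInter fun j =>
      isClosed_eq (continuous_id.matrix_elem i j) (continuous_id.matrix_elem j i)
  have h2 : IsClosed {X : Mat n | ∀ x : Fin n → ℝ, 0 ≤ ∑ i, ∑ j, x i * X i j * x j} := by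
    have : {X : Mat n | ∀ x : Fin n → ℝ, 0 ≤ ∑ i, ∑ j, x i * X i j * x j}
        = ⋂ x : Fin n → ℝ, {X : Mat n | 0 ≤ ∑ i, ∑ j, x i * X i j * x j} := by
      ext X; simp
    rw [this]
    refine isClosed_iInter fun x => isClosed_le continuous_const ?_
    refine continuous_finset_sum _ fun i _ => continuous_finset_sum _ fun j _ => ?_
    exact (continuous_const.mul (continuous_id.matrix_elem i j)).mul continuous_const
  have h3 : IsClosed {X : Mat n | X.trace = 1} := by
    refine isClosed_eq ?_ continuous_const
    exact continuous_finset_sum (Finset.univ)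
      (fun i _ => (continuous_id.matrix_elem i i : Continuous fun X : Mat n => X i i))
  have : KSet n = ({X : Mat n | X.IsHermitian}
      ∩ {X : Mat n | ∀ x : Fin n → ℝ, 0 ≤ ∑ i, ∑ j, x i * X i j * x j})
      ∩ {X : Mat n | X.trace = 1} := by
    ext X
    simp only [KSet, Set.mem_setOf_eq, Set.mem_inter_iff]
    constructor
    · rintro ⟨⟨hher, hq⟩, htr⟩
      refine ⟨⟨hher, fun x => ?_⟩, htr⟩
      have := Matrix.PosSemidef.dotProduct_mulVec_nonneg ⟨hher, hq⟩ x
      rwa [star_trivial, quadform_eq] at this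
    · rintro ⟨⟨hher, hq⟩, htr⟩
      refine ⟨Matrix.PosSemidef.of_dotProduct_mulVec_nonneg hher fun x => ?_, htr⟩
      rw [star_trivial, quadform_eq]
      exact hq x
  rw [this]
  exact (h1.inter h2).inter h3

lemma KSet_entry_bound {X : Mat n} (hX : X ∈ KSet n) (i j : Fin n) :
    X i j ∈ Set.Icc (-1 : ℝ) 1 := by
  obtain ⟨hpsd, htr⟩ := hX
  have hdiag : ∀ k, 0 ≤ X k k := psd_diag_nonneg hpsd
  have hsum : ∀ k, X k k ≤ 1 := by
    intro k
    have : X k k ≤ ∑ l, X l l := Finset.single_le_sum (fun l _ => hdiag l) (Finset.mem_univ k)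
    have ht : ∑ l, X l l = 1 := htr
    linarith
  constructor
  · have := psd_offdiag' hpsd i j
    have h1 := hsum i; have h2 := hsum j
    linarith
  · have := psd_offdiag hpsd i j
    have h1 := hsum i; have h2 := hsum j
    linarith

lemma KSet_isCompact (n : ℕ) : IsCompact (KSet n) := by
  have hQ : IsCompact ((Set.univ.pi fun _ : Fin n => Set.univ.pi fun _ : Fin n =>
      Set.Icc (-1:ℝ) 1) : Set (Matrix (Fin n) (Fin n) ℝ)) :=
    isCompact_univ_pi fun _ => isCompact_univ_pi fun _ => isCompact_Icc
  refine hQ.of_isClosed_subset KSet_isClosed ?_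
  intro X hX
  intro i _
  intro j _
  exact KSet_entry_bound hX i j

/-- The evaluation map into `ℝ^{1 + E}`: total sum plus edge entries. -/
noncomputable def Phi (G : SimpleGraph (Fin n)) [DecidableRel G.Adj] :
    Mat n →ₗ[ℝ] (Option (Fin n × Fin n) → ℝ) where
  toFun X := fun o => Option.elim o (tval X) (fun p => if G.Adj p.1 p.2 then X p.1 p.2 else 0)
  map_add' X Y := by
    funext o
    cases o with
    | none =>
        simp only [Option.elim, tval, Matrix.add_apply, Pi.add_apply]
        rw [← Finset.sum_add_distrib]
        refine Finset.sum_congr rfl fun i _ => ?_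
        rw [← Finset.sum_add_distrib]
    | some p =>
        simp only [Option.elim, Matrix.add_apply, Pi.add_apply]
        split <;> simp
  map_smul' c X := by
    funext o
    cases o with
    | none =>
        simp only [Option.elim, tval, Matrix.smul_apply, Pi.smul_apply, smul_eq_mul,
          RingHom.id_apply]
        rw [Finset.mul_sum]
        refine Finset.sum_congr rfl fun i _ => ?_
        rw [Finset.mul_sum]
    | some p =>
        simp only [Option.elim, Matrix.smul_apply, Pi.smul_apply, smul_eq_mul,
          RingHom.id_apply]
        split <;> simp

lemma Phi_continuous (G : SimpleGraph (Fin n)) [DecidableRel G.Adj] :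
    Continuous (Phi G) := by
  refine continuous_pi fun o => ?_
  cases o with
  | none =>
      exact (continuous_finset_sum _ fun i _ => continuous_finset_sum _ fun j _ =>
        continuous_id.matrix_elem i j : Continuous fun X : Mat n => ∑ i, ∑ j, X i j)
  | some p =>
      by_cases h : G.Adj p.1 p.2
      · show Continuous fun X : Mat n => if G.Adj p.1 p.2 then X p.1 p.2 else 0
        simp only [if_pos h]
        exact continuous_id.matrix_elem p.1 p.2
      · show Continuous fun X : Mat n => if G.Adj p.1 p.2 then X p.1 p.2 else 0
        simp only [if_neg h]
        exact continuous_const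

/-- Strong duality via Hahn-Banach separation: an approximate dual matrix exists. -/
lemma exists_dual (hn : 0 < n) (G : SimpleGraph (Fin n)) {ε : ℝ} (hε : 0 < ε) :
    ∃ M : Mat n, (∀ i j, M i j = M j i) ∧ (∀ i j, ¬ G.Adj i j → M i j = 1) ∧
      ∀ X ∈ KSet n, (∀ i j, X i j = X j i) →
        ∑ i, ∑ j, M i j * X i j < lovaszTheta G + ε := by
  classical
  set θ := lovaszTheta G with hθ
  set C : Set (Option (Fin n × Fin n) → ℝ) := (Phi G) '' (KSet n) with hC
  have hCconv : Convex ℝ C := (KSet_convex).linear_image (Phi G)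
  have hCclosed : IsClosed C := ((KSet_isCompact n).image (Phi_continuous G)).isClosed
  set p : Option (Fin n × Fin n) → ℝ := Pi.single none (θ + ε) with hp
  have hpnot : p ∉ C := by
    rintro ⟨X, hXK, hPhi⟩
    have hedge : ∀ i j, G.Adj i j → X i j = 0 := by
      intro i j hij
      have := congrFun hPhi (some (i, j))
      simp only [Phi, LinearMap.coe_mk, AddHom.coe_mk, Option.elim, if_pos hij] at this
      rw [this, hp]
      simp [Pi.single_apply]
    have hval : tval X = θ + ε := by
      have := congrFun hPhi none
      simp only [Phi, LinearMap.coe_mk, AddHom.coe_mk, Option.elim] at this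
      rw [this, hp]
      simp
    have hmem : (θ + ε) ∈ ThetaSet G :=
      mem_thetaSet_iff.2 ⟨X, ⟨hXK.1, hXK.2, hedge⟩, hval.symm⟩
    have := le_theta hmem
    linarith
  obtain ⟨f, u, hfC, hfp⟩ := geometric_hahn_banach_closed_point hCconv hCclosed hpnot
  set α : ℝ := f (Pi.single none 1) with hα
  set c : Fin n → Fin n → ℝ := fun i j => f (Pi.single (some (i, j)) 1) with hc
  have hsingle : ∀ (o : Option (Fin n × Fin n)) (v : ℝ),
      (Pi.single o v : Option (Fin n × Fin n) → ℝ)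
        = v • (Pi.single o (1:ℝ) : Option (Fin n × Fin n) → ℝ) := by
    intro o v
    funext o'
    by_cases h : o' = o
    · subst h; simp
    · simp [Pi.single_eq_of_ne h]
  have hdecomp : ∀ y : Option (Fin n × Fin n) → ℝ,
      f y = y none * α + ∑ i, ∑ j, y (some (i, j)) * c i j := by
    intro y
    have hyf : f y = ∑ o : Option (Fin n × Fin n), f (Pi.single o (y o)) := by
      conv_lhs => rw [← Finset.univ_sum_single y]
      rw [map_sum]
    rw [hyf, Fintype.sum_option]
    congr 1
    · rw [hsingle, f.map_smul, smul_eq_mul]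
    · rw [Fintype.sum_prod_type]
      refine Finset.sum_congr rfl (fun i _ => Finset.sum_congr rfl fun j _ => ?_)
      rw [hsingle, f.map_smul, smul_eq_mul, hc]
  have hfp' : f p = (θ + ε) * α := by
    rw [hdecomp, hp]
    simp [Pi.single_apply]
  have hfX : ∀ X ∈ KSet n, tval X * α
      + ∑ i, ∑ j, (if G.Adj i j then X i j else 0) * c i j < u := by
    intro X hX
    have := hfC _ ⟨X, hX, rfl⟩
    rwa [hdecomp] at this
  have hu : u < (θ + ε) * α := by rwa [hfp'] at hfp
  -- α is positive
  have hbase := baseFeas hn G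
  have hXK : ((n : ℝ)⁻¹ • (1 : Mat n)) ∈ KSet n := ⟨hbase.1.1, hbase.1.2.1⟩
  have hα_pos : 0 < α := by
    have h1 := hfX _ hXK
    have hz : ∑ i, ∑ j, (if G.Adj i j then ((n : ℝ)⁻¹ • (1 : Mat n)) i j else 0) * c i j
        = 0 := by
      refine Finset.sum_eq_zero fun i _ => Finset.sum_eq_zero fun j _ => ?_
      by_cases h : G.Adj i j
      · rw [if_pos h]
        have : ((n : ℝ)⁻¹ • (1 : Mat n)) i j = 0 := by
          simp [Matrix.one_apply, h.ne]
        rw [this, zero_mul]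
      · rw [if_neg h, zero_mul]
    rw [hbase.2, hz, add_zero, one_mul] at h1
    have hθ1 : 1 ≤ θ := one_le_theta hn G
    nlinarith [h1, hu, hθ1, hε]
  -- construct M
  refine ⟨Matrix.of fun i j => 1 + (if G.Adj i j then (c i j + c j i) / (2 * α) else 0),
    ?_, ?_, ?_⟩
  · intro i j
    simp only [Matrix.of_apply]
    by_cases h : G.Adj i j
    · rw [if_pos h, if_pos h.symm]
      ring_nf
    · rw [if_neg h, if_neg (fun h' => h h'.symm)]
  · intro i j h
    simp only [Matrix.of_apply, if_neg h, add_zero]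
  · intro X hX hXsym
    have hkey := hfX X hX
    have hswap : ∑ i, ∑ j, (if G.Adj i j then X i j else 0) * c j i
        = ∑ i, ∑ j, (if G.Adj i j then X i j else 0) * c i j := by
      rw [Finset.sum_comm]
      refine Finset.sum_congr rfl fun i _ => Finset.sum_congr rfl fun j _ => ?_
      by_cases h : G.Adj i j
      · rw [if_pos h, if_pos h.symm, hXsym i j]
      · rw [if_neg h, if_neg (fun h' => h h'.symm)]
    have hterm : ∀ i : Fin n, α * ∑ j,
        (1 + (if G.Adj i j then (c i j + c j i) / (2 * α) else 0)) * X i j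
        = α * ∑ j, X i j
          + ∑ j, ((if G.Adj i j then X i j else 0) * c i j
              + (if G.Adj i j then X i j else 0) * c j i) / 2 := by
      intro i
      rw [Finset.mul_sum, Finset.mul_sum, ← Finset.sum_add_distrib]
      refine Finset.sum_congr rfl fun j _ => ?_
      by_cases h : G.Adj i j
      · rw [if_pos h, if_pos h]
        field_simp
      · rw [if_neg h, if_neg h]
        ring
    have hexpand : α * (∑ i, ∑ j,
        (Matrix.of fun i j => 1 + (if G.Adj i j then (c i j + c j i) / (2 * α) else 0)) i j
          * X i j)
        = α * tval X + ∑ i, ∑ j, (if G.Adj i j then X i j else 0) * c i j := by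
      rw [Finset.mul_sum]
      have : ∀ i : Fin n, α * ∑ j,
          (Matrix.of fun i j => 1 + (if G.Adj i j then (c i j + c j i) / (2 * α) else 0)) i j
            * X i j
          = α * ∑ j, X i j
            + ∑ j, ((if G.Adj i j then X i j else 0) * c i j
                + (if G.Adj i j then X i j else 0) * c j i) / 2 := by
        intro i
        have := hterm i
        simpa using this
      rw [Finset.sum_congr rfl fun i _ => this i, Finset.sum_add_distrib]
      congr 1
      · rw [tval, Finset.mul_sum]
      · simp only [← Finset.sum_div, Finset.sum_add_distrib]
        rw [hswap, add_self_div_two]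
    have hfin : α * (∑ i, ∑ j,
        (Matrix.of fun i j => 1 + (if G.Adj i j then (c i j + c j i) / (2 * α) else 0)) i j
          * X i j) < α * (θ + ε) := by
      rw [hexpand]
      nlinarith [hkey, hu]
    exact (mul_lt_mul_iff_right₀ hα_pos).1 hfin

lemma tval_add (A B : Mat n) : tval (A + B) = tval A + tval B := by
  unfold tval
  rw [← Finset.sum_add_distrib]
  refine Finset.sum_congr rfl fun i _ => ?_
  rw [← Finset.sum_add_distrib]
  refine Finset.sum_congr rfl fun j _ => ?_
  simp

lemma tval_sub (A B : Mat n) : tval (A - B) = tval A - tval B := by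
  unfold tval
  rw [← Finset.sum_sub_distrib]
  refine Finset.sum_congr rfl fun i _ => ?_
  rw [← Finset.sum_sub_distrib]
  refine Finset.sum_congr rfl fun j _ => ?_
  simp

lemma tval_smul (c : ℝ) (A : Mat n) : tval (c • A) = c * tval A := by
  unfold tval
  rw [Finset.mul_sum]
  refine Finset.sum_congr rfl fun i _ => ?_
  rw [Finset.mul_sum]
  refine Finset.sum_congr rfl fun j _ => ?_
  simp

lemma tval_one : tval (1 : Mat n) = n := by
  unfold tval
  have : ∀ i : Fin n, ∑ j, (1 : Mat n) i j = 1 := by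
    intro i
    rw [Finset.sum_eq_single i]
    · simp
    · intro b _ hb; exact Matrix.one_apply_ne' hb
    · simp
  rw [Finset.sum_congr rfl fun i _ => this i]
  simp

lemma tval_Jm : tval (Jm n) = (n : ℝ) * n := by
  unfold tval Jm
  simp [Finset.sum_const]

lemma one_quadform (x : Fin n → ℝ) :
    ∑ i, ∑ j, x i * (1 : Mat n) i j * x j = ∑ i, x i * x i := by
  refine Finset.sum_congr rfl fun i _ => ?_
  rw [Finset.sum_eq_single i]
  · simp
  · intro b _ hb
    rw [Matrix.one_apply_ne (Ne.symm hb)]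
    ring
  · simp

lemma dual_lower (hn : 0 < n) (G : SimpleGraph (Fin n)) {τ : ℝ} (hτ : 0 < τ) {M : Mat n}
    (hMsym : ∀ i j, M i j = M j i) (hMnon : ∀ i j, ¬ G.Adj i j → M i j = 1)
    (hb : ∀ X ∈ KSet n, (∀ i j, X i j = X j i) → ∑ i, ∑ j, M i j * X i j ≤ τ) :
    (n : ℝ) / τ ≤ lovaszTheta Gᶜ := by
  classical
  have hn' : (0:ℝ) < n := by exact_mod_cast hn
  -- quadratic form bound for M
  have hquadM : ∀ x : Fin n → ℝ, ∑ i, ∑ j, x i * M i j * x j ≤ τ * (∑ i, x i * x i) := by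
    intro x
    by_cases hx : x = 0
    · subst hx; simp
    · obtain ⟨i₀, hi₀⟩ := Function.ne_iff.1 hx
      have hi₀' : x i₀ ≠ 0 := by simpa using hi₀
      have hd : 0 < ∑ i, x i * x i := by
        have h1 : x i₀ * x i₀ ≤ ∑ i, x i * x i :=
          Finset.single_le_sum (fun l _ => mul_self_nonneg (x l)) (Finset.mem_univ i₀)
        have h2 : 0 < x i₀ * x i₀ := mul_self_pos.2 hi₀'
        linarith
      set d : ℝ := ∑ i, x i * x i with hdd
      set X : Mat n := d⁻¹ • Matrix.of (fun i j => x i * x j) with hX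
      have hXapp : ∀ i j, X i j = d⁻¹ * (x i * x j) := by
        intro i j; rw [hX]; simp
      have hXsym : ∀ i j, X i j = X j i := by
        intro i j; rw [hXapp, hXapp]; ring
      have hXpsd : X.PosSemidef := by
        refine Matrix.PosSemidef.of_dotProduct_mulVec_nonneg ?_ ?_
        · exact herm_iff.2 hXsym
        · intro v
          rw [star_trivial, quadform_eq]
          have hrow : ∀ i, ∑ j, v i * X i j * v j
              = (v i * x i * d⁻¹) * ∑ j, v j * x j := by
            intro i
            rw [Finset.mul_sum]
            refine Finset.sum_congr rfl fun j _ => ?_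
            rw [hXapp]; ring
          rw [Finset.sum_congr rfl fun i _ => hrow i, ← Finset.sum_mul]
          have h1 : ∑ i, v i * x i * d⁻¹ = (∑ i, v i * x i) * d⁻¹ := by
            rw [Finset.sum_mul]
          rw [h1]
          have h2 := mul_self_nonneg (∑ i, v i * x i)
          have h3 : (0:ℝ) ≤ d⁻¹ := by positivity
          nlinarith
      have hXtr : X.trace = 1 := by
        have : X.trace = ∑ i, X i i := rfl
        rw [this, Finset.sum_congr rfl fun i _ => hXapp i i, ← Finset.mul_sum, ← hdd]
        field_simp
      have hbX := hb X ⟨hXpsd, hXtr⟩ hXsym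
      have hsum : ∑ i, ∑ j, M i j * X i j = d⁻¹ * ∑ i, ∑ j, x i * M i j * x j := by
        rw [Finset.mul_sum]
        refine Finset.sum_congr rfl fun i _ => ?_
        rw [Finset.mul_sum]
        refine Finset.sum_congr rfl fun j _ => ?_
        rw [hXapp]; ring
      rw [hsum] at hbX
      have := (mul_le_mul_iff_right₀ (show (0:ℝ) < d from hd)).2 hbX
      rw [← mul_assoc, mul_inv_cancel₀ hd.ne', one_mul] at this
      calc ∑ i, ∑ j, x i * M i j * x j ≤ d * τ := this
        _ = τ * d := by ring
  -- N is PSD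
  set N : Mat n := τ • (1 : Mat n) - M with hN
  have hNapp : ∀ i j, N i j = τ * (1 : Mat n) i j - M i j := by
    intro i j; rw [hN]; simp
  have hNpsd : N.PosSemidef := by
    refine Matrix.PosSemidef.of_dotProduct_mulVec_nonneg ?_ ?_
    · refine herm_iff.2 fun i j => ?_
      rw [hNapp, hNapp, hMsym i j]
      congr 1
      by_cases h : i = j
      · subst h; rfl
      · rw [Matrix.one_apply_ne h, Matrix.one_apply_ne (Ne.symm h)]
    · intro v
      rw [star_trivial, quadform_eq]
      have hsplit : ∑ i, ∑ j, v i * N i j * v j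
          = τ * (∑ i, v i * v i) - ∑ i, ∑ j, v i * M i j * v j := by
        have : ∀ i j, v i * N i j * v j
            = τ * (v i * (1 : Mat n) i j * v j) - v i * M i j * v j := by
          intro i j; rw [hNapp]; ring
        rw [Finset.sum_congr rfl fun i _ => Finset.sum_congr rfl fun j _ => this i j]
        rw [Finset.sum_congr rfl fun i (_ : i ∈ Finset.univ) => Finset.sum_sub_distrib _ _,
          Finset.sum_sub_distrib]
        congr 1
        simp only [← Finset.mul_sum]
        rw [one_quadform]
      rw [hsplit, sub_nonneg]
      exact hquadM v
  -- the primal solution for the complement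
  set Y' : Mat n := N + Jm n with hY'
  have hY'psd : Y'.PosSemidef := hNpsd.add psd_Jm
  have htrM : M.trace = n := by
    have : M.trace = ∑ i, M i i := rfl
    rw [this, Finset.sum_congr rfl fun i _ => hMnon i i (G.irrefl)]
    simp
  have htrY' : Y'.trace = n * τ := by
    rw [hY', Matrix.trace_add, hN, Matrix.trace_sub, Matrix.trace_smul, Matrix.trace_one,
      htrM, trace_Jm]
    simp [Fintype.card_fin]
    ring
  have htvM : tval M ≤ τ * n := by
    have hXK : ((n:ℝ)⁻¹ • Jm n) ∈ KSet n := by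
      refine ⟨psd_smul (by positivity) psd_Jm, ?_⟩
      rw [Matrix.trace_smul, trace_Jm]
      simp [hn'.ne']
    have hXsym : ∀ i j, ((n:ℝ)⁻¹ • Jm n) i j = ((n:ℝ)⁻¹ • Jm n) j i := by
      intro i j; simp [Jm]
    have hbX := hb _ hXK hXsym
    have heq : ∑ i, ∑ j, M i j * ((n:ℝ)⁻¹ • Jm n) i j
        = (n:ℝ)⁻¹ * ∑ i, ∑ j, M i j := by
      simp only [Finset.mul_sum]
      refine Finset.sum_congr rfl fun i _ => Finset.sum_congr rfl fun j _ => ?_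
      simp [Jm]
      ring
    rw [heq] at hbX
    have h2 := (mul_le_mul_iff_right₀ hn').2 hbX
    rw [← mul_assoc, mul_inv_cancel₀ hn'.ne', one_mul] at h2
    have h3 : tval M = ∑ i, ∑ j, M i j := rfl
    rw [h3]
    linarith
  have htvY' : (n:ℝ) * n ≤ tval Y' := by
    rw [hY', tval_add, hN, tval_sub, tval_smul, tval_one, tval_Jm]
    nlinarith [htvM]
  -- assemble the feasible solution
  set Y : Mat n := ((n:ℝ) * τ)⁻¹ • Y' with hY
  have hprod : (0:ℝ) < n * τ := by positivity
  have hYfeas : Feas Gᶜ Y := by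
    refine ⟨psd_smul (by positivity) hY'psd, ?_, ?_⟩
    · rw [hY, Matrix.trace_smul, htrY']
      simp only [smul_eq_mul, mul_inv]
      field_simp
    · intro i j hij
      rw [SimpleGraph.compl_adj] at hij
      have h1 : Y' i j = 0 := by
        rw [hY', Matrix.add_apply, hNapp, Matrix.one_apply_ne hij.1, hMnon i j hij.2]
        simp [Jm]
      rw [hY]
      simp [h1]
  have hYval : (n:ℝ) / τ ≤ tval Y := by
    rw [hY, tval_smul]
    have h1 : ((n:ℝ)*τ)⁻¹ * ((n:ℝ)*n) ≤ ((n:ℝ)*τ)⁻¹ * tval Y' :=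
      mul_le_mul_of_nonneg_left htvY' (by positivity)
    have h2 : (n:ℝ)/τ = ((n:ℝ)*τ)⁻¹ * ((n:ℝ)*n) := by
      field_simp
    linarith
  calc (n:ℝ) / τ ≤ tval Y := hYval
    _ ≤ lovaszTheta Gᶜ := le_theta (mem_thetaSet_iff.2 ⟨Y, hYfeas, rfl⟩)

lemma lower_bound (hn : 0 < n) (G : SimpleGraph (Fin n)) :
    (n : ℝ) ≤ lovaszTheta G * lovaszTheta Gᶜ := by
  have hθ1 : 1 ≤ lovaszTheta G := one_le_theta hn G
  have hθ'1 : 1 ≤ lovaszTheta Gᶜ := one_le_theta hn Gᶜ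
  have hθ'pos : 0 < lovaszTheta Gᶜ := by linarith
  refine le_of_forall_pos_le_add fun ε' hε' => ?_
  set ε : ℝ := ε' / lovaszTheta Gᶜ with hε
  have hεpos : 0 < ε := div_pos hε' hθ'pos
  obtain ⟨M, hsym, hnon, hbnd⟩ := exists_dual hn G hεpos
  have hτ : 0 < lovaszTheta G + ε := by linarith
  have hdl := dual_lower hn G hτ hsym hnon (fun X hX hXs => (hbnd X hX hXs).le)
  rw [div_le_iff₀ hτ] at hdl
  have hmul : ε * lovaszTheta Gᶜ = ε' := by
    rw [hε, div_mul_cancel₀ _ hθ'pos.ne']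
  nlinarith [hdl, hmul]

lemma upper_bound (hn : 0 < n) (G : SimpleGraph (Fin n))
    (htr : ∀ u v : Fin n, ∃ σ : Equiv.Perm (Fin n),
      (∀ a b, G.Adj (σ a) (σ b) ↔ G.Adj a b) ∧ σ u = v) :
    lovaszTheta G * lovaszTheta Gᶜ ≤ n := by
  have hn' : (0:ℝ) < n := by exact_mod_cast hn
  have htr' : ∀ u v : Fin n, ∃ σ : Equiv.Perm (Fin n),
      (∀ a b, Gᶜ.Adj (σ a) (σ b) ↔ Gᶜ.Adj a b) ∧ σ u = v := by
    intro u v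
    obtain ⟨σ, hσ, h⟩ := htr u v
    refine ⟨σ, fun a b => ?_, h⟩
    have h1 : σ a ≠ σ b ↔ a ≠ b := (Equiv.injective σ).ne_iff
    simp [SimpleGraph.compl_adj, hσ a b, h1]
  set θ := lovaszTheta G with hθdef
  set θ' := lovaszTheta Gᶜ with hθ'def
  have hθ1 : 1 ≤ θ := one_le_theta hn G
  have hθ'1 : 1 ≤ θ' := one_le_theta hn Gᶜ
  have hkey : ∀ ε : ℝ, 0 < ε → ε ≤ 1 → (θ - ε) * (θ' - ε) ≤ n := by
    intro ε hε hε1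
    obtain ⟨X₀, hX₀, hX₀v⟩ := exists_near hn G hε
    obtain ⟨Y₀, hY₀, hY₀v⟩ := exists_near hn Gᶜ hε
    obtain ⟨X, hXF, hXv, hXd, hXr⟩ := averaging hn G htr hX₀
    obtain ⟨Y, hYF, hYv, hYd, hYr⟩ := averaging hn Gᶜ htr' hY₀
    have hXr' : ∀ i, ∑ j, X i j = tval X / n := by
      intro i; rw [hXv]; exact hXr i
    have hYr' : ∀ i, ∑ j, Y i j = tval Y / n := by
      intro i; rw [hYv]; exact hYr i
    have hcs := cs_bound hn G hXF hYF hXd hXr' hYd hYr'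
    have h1 : θ - ε ≤ tval X := by rw [hXv]; linarith
    have h2 : θ' - ε ≤ tval Y := by rw [hYv]; linarith
    have h3 : (0:ℝ) ≤ θ' - ε := by linarith
    have h4 : (0:ℝ) ≤ tval X := by linarith
    calc (θ - ε) * (θ' - ε) ≤ tval X * tval Y := mul_le_mul h1 h2 h3 h4
      _ ≤ n := hcs
  by_contra hcon
  push_neg at hcon
  set ε : ℝ := min 1 ((θ * θ' - n) / (θ + θ')) with hεdef
  have hsumpos : 0 < θ + θ' := by linarith
  have hεpos : 0 < ε := by
    refine lt_min one_pos ?_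
    exact div_pos (by linarith) hsumpos
  have hε1 : ε ≤ 1 := min_le_left _ _
  have hεle : ε * (θ + θ') ≤ θ * θ' - n := by
    have : ε ≤ (θ * θ' - n) / (θ + θ') := min_le_right _ _
    calc ε * (θ + θ') ≤ ((θ * θ' - n) / (θ + θ')) * (θ + θ') :=
          mul_le_mul_of_nonneg_right this hsumpos.le
      _ = θ * θ' - n := div_mul_cancel₀ _ hsumpos.ne'
  have := hkey ε hεpos hε1
  nlinarith [this, hεle, hεpos, mul_pos hεpos hεpos]

end LovaszThetaAux

/-- For a vertex-transitive graph `G` on `n` vertices, `ϑ(G) ⬝ ϑ(Ḡ) = n`. -/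
theorem lovaszTheta_mul_lovaszTheta_compl {n : ℕ} (hn : 0 < n) (G : SimpleGraph (Fin n))
    (hvt : ∀ u v : Fin n, ∃ φ : G ≃g G, φ u = v) :
    lovaszTheta G * lovaszTheta Gᶜ = n := by
  have htr : ∀ u v : Fin n, ∃ σ : Equiv.Perm (Fin n),
      (∀ a b, G.Adj (σ a) (σ b) ↔ G.Adj a b) ∧ σ u = v := by
    intro u v
    obtain ⟨φ, hφ⟩ := hvt u v
    exact ⟨φ.toEquiv, fun a b => φ.map_adj_iff, hφ⟩
  have h1 := LovaszThetaAux.lower_bound hn G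
  have h2 := LovaszThetaAux.upper_bound hn G htr
  linarith
end

section
/- For any simple undirected graph G, the clique number satisfies ω(G) ≤ ϑ(Ḡ), where ϑ is the Lovász theta number and Ḡ is the complement graph. -/
open scoped BigOperators

lemma entry_le {n : ℕ} {X : Matrix (Fin n) (Fin n) ℝ} (hX : X.PosSemidef) (i j : Fin n) :
    2 * X i j ≤ X i i + X j j := by
  rcases eq_or_ne i j with rfl | hij
  · have := hX.dotProduct_mulVec_nonneg (Pi.single i 1)
    simp [dotProduct, Matrix.mulVec, Pi.single_apply] at this
    linarith
  · have h := hX.dotProduct_mulVec_nonneg (Pi.single i 1 - Pi.single j 1)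
    have hsym : X j i = X i j := by
      have := hX.1
      have := congrFun (congrFun this.symm j) i
      simpa [Matrix.conjTranspose_apply] using this
    simp [dotProduct, Matrix.mulVec, Pi.single_apply, sub_mul, mul_sub,
      Finset.sum_sub_distrib, Finset.sum_ite_eq', hij, hij.symm, hsym] at h
    linarith

lemma theta_bdd {n : ℕ} (G : SimpleGraph (Fin n)) :
    BddAbove {t : ℝ | ∃ X : Matrix (Fin n) (Fin n) ℝ, X.PosSemidef ∧ X.trace = 1 ∧
      (∀ i j, G.Adj i j → X i j = 0) ∧ t = ∑ i, ∑ j, X i j} := by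
  refine ⟨n, ?_⟩
  rintro t ⟨X, hPSD, htr, -, rfl⟩
  have h1 : ∑ i, ∑ j, X i j ≤ ∑ i : Fin n, ∑ j : Fin n, (X i i + X j j) / 2 := by
    refine Finset.sum_le_sum fun i _ => Finset.sum_le_sum fun j _ => ?_
    have := entry_le hPSD i j
    linarith
  have htr' : ∑ i, X i i = 1 := htr
  have h2 : ∑ i : Fin n, ∑ j : Fin n, (X i i + X j j) / 2 = n := by
    have heach : ∀ i : Fin n, ∑ j : Fin n, (X i i + X j j) / 2 = ((n : ℝ) * X i i + 1) / 2 := by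
      intro i
      rw [← Finset.sum_div, Finset.sum_add_distrib, Finset.sum_const, htr', Finset.card_univ,
        Fintype.card_fin, nsmul_eq_mul]
    simp_rw [heach]
    rw [← Finset.sum_div, Finset.sum_add_distrib, ← Finset.mul_sum, htr', Finset.sum_const,
      Finset.card_univ, Fintype.card_fin, nsmul_eq_mul]
    ring
  linarith

/-- The clique number is at most the Lovász theta number of the complement graph. -/
theorem cliqueNum_le_lovaszTheta_compl {n : ℕ} (G : SimpleGraph (Fin n)) :
    (G.cliqueNum : ℝ) ≤ lovaszTheta Gᶜ := by
  obtain ⟨s, hs⟩ := G.exists_isNClique_cliqueNum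
  set k := G.cliqueNum with hk
  rcases Nat.eq_zero_or_pos k with hk0 | hkpos
  · rw [hk0]
    push_cast
    refine Real.sSup_nonneg ?_
    rintro t ⟨X, hPSD, -, -, rfl⟩
    have h := hPSD.dotProduct_mulVec_nonneg (fun _ => 1)
    simpa [dotProduct, Matrix.mulVec] using h
  · have hkR : (0:ℝ) < k := by exact_mod_cast hkpos
    set X : Matrix (Fin n) (Fin n) ℝ :=
      Matrix.of fun i j => if i ∈ s ∧ j ∈ s then (k:ℝ)⁻¹ else 0 with hX
    have hmem : (k:ℝ) ∈ {t : ℝ | ∃ X : Matrix (Fin n) (Fin n) ℝ, X.PosSemidef ∧ X.trace = 1 ∧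
        (∀ i j, Gᶜ.Adj i j → X i j = 0) ∧ t = ∑ i, ∑ j, X i j} := by
      refine ⟨X, Matrix.posSemidef_iff_dotProduct_mulVec.mpr ⟨?_, ?_⟩, ?_, ?_, ?_⟩
      · ext i j
        simp [hX, Matrix.conjTranspose_apply, and_comm]
      · intro x
        have key : dotProduct (star x) (X.mulVec x)
            = (k:ℝ)⁻¹ * (∑ i ∈ s, x i)^2 := by
          simp only [hX, dotProduct, Matrix.mulVec, star_trivial, Matrix.of_apply]
          rw [← Finset.sum_filter_add_sum_filter_not Finset.univ (· ∈ s)]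
          have h1 : ∀ i ∈ Finset.univ.filter (· ∈ s),
              x i * ∑ j, (if i ∈ s ∧ j ∈ s then (k:ℝ)⁻¹ else 0) * x j
              = (k:ℝ)⁻¹ * x i * ∑ j ∈ s, x j := by
            intro i hi
            simp only [Finset.mem_filter] at hi
            rw [Finset.mul_sum, Finset.mul_sum]
            rw [← Finset.sum_filter_add_sum_filter_not Finset.univ (· ∈ s)]
            have : ∀ j ∈ Finset.univ.filter (¬ · ∈ s),
                x i * ((if i ∈ s ∧ j ∈ s then (k:ℝ)⁻¹ else 0) * x j) = 0 := by
              intro j hj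
              simp only [Finset.mem_filter] at hj
              simp [hj.2]
            rw [Finset.sum_eq_zero this, add_zero]
            rw [show Finset.univ.filter (· ∈ s) = s by ext; simp]
            refine Finset.sum_congr rfl fun j hj => ?_
            simp [hi.2, hj]; ring
          have h2 : ∀ i ∈ Finset.univ.filter (¬ · ∈ s),
              x i * ∑ j, (if i ∈ s ∧ j ∈ s then (k:ℝ)⁻¹ else 0) * x j = 0 := by
            intro i hi
            simp only [Finset.mem_filter] at hi
            simp [hi.2]
          rw [Finset.sum_congr rfl h1, Finset.sum_eq_zero h2, add_zero]
          rw [show Finset.univ.filter (· ∈ s) = s by ext; simp]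
          rw [← Finset.sum_mul, ← Finset.mul_sum]
          ring
        rw [key]
        positivity
      · have : X.trace = ∑ i, X i i := rfl
        rw [this]
        have : ∀ i : Fin n, X i i = if i ∈ s then (k:ℝ)⁻¹ else 0 := by
          intro i; simp [hX, and_self]
        simp_rw [this]
        rw [Finset.sum_ite_mem, Finset.univ_inter, Finset.sum_const, hs.card_eq,
          nsmul_eq_mul]
        field_simp
      · intro i j hadj
        have hne : i ≠ j := hadj.ne
        have hnadj : ¬ G.Adj i j := hadj.2
        have : ¬ (i ∈ s ∧ j ∈ s) := by
          rintro ⟨hi, hj⟩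
          exact hnadj (hs.isClique hi hj hne)
        simp [hX, this]
      · have : ∀ i : Fin n, ∑ j, X i j = if i ∈ s then (k:ℝ) * (k:ℝ)⁻¹ else 0 := by
          intro i
          rcases Decidable.em (i ∈ s) with hi | hi
          · simp only [hX, Matrix.of_apply, hi, true_and, if_pos hi]
            rw [Finset.sum_ite_mem, Finset.univ_inter, Finset.sum_const, hs.card_eq,
              nsmul_eq_mul]
            simp
          · simp [hX, hi]
        simp_rw [this]
        rw [Finset.sum_ite_mem, Finset.univ_inter, Finset.sum_const, hs.card_eq,
          nsmul_eq_mul]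
        field_simp
    have : (k:ℝ) ≤ sSup {t : ℝ | ∃ X : Matrix (Fin n) (Fin n) ℝ, X.PosSemidef ∧ X.trace = 1 ∧
        (∀ i j, Gᶜ.Adj i j → X i j = 0) ∧ t = ∑ i, ∑ j, X i j} := le_csSup (theta_bdd Gᶜ) hmem
    exact this
end

section
/- For any simple undirected graph G, the Lovász theta number of the complement satisfies ϑ(Ḡ) ≤ χ(G), where χ(G) is the chromatic number. -/
open scoped BigOperators

/-- The Lovász theta number of the complement is at most the chromatic number. -/
theorem lovaszTheta_compl_le_chromaticNumber {n : ℕ} (G : SimpleGraph (Fin n)) :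
    lovaszTheta Gᶜ ≤ (G.chromaticNumber.toNat : ℝ) := by
  classical
  set k := G.chromaticNumber.toNat with hk
  obtain ⟨C⟩ := G.colorable_chromaticNumber_of_fintype
  apply Real.sSup_le
  · rintro t ⟨X, hX, htr, hzero, rfl⟩
    obtain ⟨B, rfl⟩ : ∃ B : Matrix (Fin n) (Fin n) ℝ, X = B.conjTranspose * B :=
      by open scoped MatrixOrder Matrix.Norms.L2Operator in
        exact CStarAlgebra.nonneg_iff_eq_star_mul_self.mp hX.nonneg
    set X := B.conjTranspose * B with hXdef
    have hXe : ∀ i j, X i j = ∑ r, B r i * B r j := by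
      intro i j
      simp [hXdef, Matrix.mul_apply, Matrix.conjTranspose_apply]
    -- color classes
    set S : Fin k → Finset (Fin n) :=
      fun m => Finset.univ.filter (fun i => C i = m) with hS
    set s : Fin k → Fin n → ℝ := fun m r => ∑ i ∈ S m, B r i with hs
    -- within a color class, off-diagonal entries of X vanish
    have key : ∀ m : Fin k, ∑ i ∈ S m, ∑ j ∈ S m, X i j = ∑ i ∈ S m, X i i := by
      intro m
      refine Finset.sum_congr rfl fun i hi => ?_
      refine Finset.sum_eq_single i (fun j hj hne => ?_) (fun h => absurd hi h)
      apply hzero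
      rw [SimpleGraph.compl_adj]
      refine ⟨hne.symm, fun hadj => ?_⟩
      have h1 : C i = m := (Finset.mem_filter.mp hi).2
      have h2 : C j = m := (Finset.mem_filter.mp hj).2
      exact C.valid hadj (h1.trans h2.symm)
    -- total sum as a sum of squares
    have h1 : ∑ i, ∑ j, X i j = ∑ r, (∑ i, B r i) ^ 2 := by
      simp_rw [hXe, sq, Finset.sum_mul_sum]
      calc ∑ i, ∑ j, ∑ r, B r i * B r j
          = ∑ i, ∑ r, ∑ j, B r i * B r j :=
            Finset.sum_congr rfl fun i _ => Finset.sum_comm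
        _ = ∑ r, ∑ i, ∑ j, B r i * B r j := Finset.sum_comm
    -- per color class
    have h2 : ∀ m, ∑ r, (s m r) ^ 2 = ∑ i ∈ S m, ∑ j ∈ S m, X i j := by
      intro m
      simp_rw [hXe, hs, sq, Finset.sum_mul_sum]
      calc ∑ r, ∑ i ∈ S m, ∑ j ∈ S m, B r i * B r j
          = ∑ i ∈ S m, ∑ r, ∑ j ∈ S m, B r i * B r j := Finset.sum_comm
        _ = ∑ i ∈ S m, ∑ j ∈ S m, ∑ r, B r i * B r j :=
            Finset.sum_congr rfl fun i _ => Finset.sum_comm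
    -- decomposition of the full row sum by color classes
    have h3 : ∀ r, ∑ i, B r i = ∑ m, s m r := by
      intro r
      simp_rw [hs, hS]
      exact (Finset.sum_fiberwise Finset.univ (fun i => C i) (fun i => B r i)).symm
    -- trace decomposition
    have h4 : ∑ m, ∑ i ∈ S m, X i i = 1 := by
      rw [hS]
      rw [Finset.sum_fiberwise Finset.univ (fun i => C i) (fun i => X i i)]
      simpa [Matrix.trace] using htr
    have hcs : ∀ r, (∑ i, B r i) ^ 2 ≤ (k : ℝ) * ∑ m, (s m r) ^ 2 := by
      intro r
      rw [h3 r]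
      have := sq_sum_le_card_mul_sum_sq (s := (Finset.univ : Finset (Fin k)))
        (f := fun m => s m r)
      simpa using this
    calc ∑ i, ∑ j, X i j = ∑ r, (∑ i, B r i) ^ 2 := h1
      _ ≤ ∑ r, (k : ℝ) * ∑ m, (s m r) ^ 2 := Finset.sum_le_sum fun r _ => hcs r
      _ = (k : ℝ) * ∑ r, ∑ m, (s m r) ^ 2 := by rw [Finset.mul_sum]
      _ = (k : ℝ) * ∑ m, ∑ r, (s m r) ^ 2 := by rw [Finset.sum_comm]
      _ = (k : ℝ) * ∑ m, ∑ i ∈ S m, ∑ j ∈ S m, X i j := by simp_rw [h2]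
      _ = (k : ℝ) * ∑ m, ∑ i ∈ S m, X i i := by simp_rw [key]
      _ = (k : ℝ) := by rw [h4, mul_one]
  · exact Nat.cast_nonneg k
end

section
/- Let b ∈ {−1,1}ⁿ be a random vector with b₀ = 1, b_k = b_{n−k}, and b₁,…,b_{(n−1)/2} i.i.d. uniform on {±1} (n odd). Let F be the n×n DFT matrix and g = Fb. Then P(‖g‖_∞ > 1 + 4√(n log n)) ≤ 2/n. -/
open MeasureTheory ProbabilityTheory
open scoped BigOperators

/-- Entries of the `n × n` DFT matrix: `F j k = exp(-2πi jk/n)`. -/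
noncomputable def dftF (n : ℕ) (j k : Fin n) : ℂ :=
  Complex.exp (-2 * Real.pi * Complex.I * (j : ℕ) * (k : ℕ) / n)

/-- The random `±1` vector `b` built from fair coin flips `x`: `b 0 = 1`,
`b k = b (n - k)`, and the entries `b 1, …, b ((n-1)/2)` are determined by
independent uniform bits. -/
def pmSign (n : ℕ) (x : Fin n → Bool) (k : Fin n) : ℝ :=
  if k.val = 0 then 1
  else if 2 * k.val < n then (if x k then 1 else -1)
  else (if x (-k) then 1 else -1)

/-- Uniform probability measure on sign configurations. -/
noncomputable def coinMeasure (n : ℕ) : Measure (Fin n → Bool) :=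
  (PMF.uniformOfFintype (Fin n → Bool)).toMeasure

namespace DftTail

open Finset

lemma coin_eq (n : ℕ) (S : Set (Fin n → Bool)) [Fintype S] :
    coinMeasure n S = ENNReal.ofReal (S.toFinset.card / 2 ^ n) := by
  classical
  have hms : MeasurableSet S := S.toFinite.measurableSet
  rw [coinMeasure, PMF.toMeasure_apply _ _]
  have h1 : ∀ a, Set.indicator S (⇑(PMF.uniformOfFintype (Fin n → Bool))) a
      = Set.indicator S (fun _ => ((2^n : ℕ): ENNReal)⁻¹) a := by
    intro a
    unfold Set.indicator
    split <;> simp [PMF.uniformOfFintype_apply, Fintype.card_fun]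
  rw [tsum_congr h1, tsum_eq_sum (s := S.toFinset) (by
    intro b hb; simp [Set.indicator_of_notMem (by simpa using hb)])]
  have h2 : ∀ b ∈ S.toFinset, Set.indicator S (fun _ => ((2^n : ℕ): ENNReal)⁻¹) b
      = ((2^n : ℕ): ENNReal)⁻¹ := by
    intro b hb; exact Set.indicator_of_mem (by simpa using hb) _
  rw [Finset.sum_congr rfl h2, Finset.sum_const, nsmul_eq_mul]
  rw [ENNReal.ofReal_div_of_pos (by positivity)]
  rw [ENNReal.ofReal_natCast, show ENNReal.ofReal (2^n) = ((2^n : ℕ) : ENNReal) by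
      rw [← ENNReal.ofReal_natCast]; norm_num,
    ENNReal.div_eq_inv_mul, mul_comm]
  exact hms

lemma coin_le (n : ℕ) (S : Set (Fin n → Bool)) (F : Finset (Fin n → Bool))
    (hSF : S ⊆ ↑F) (r : ℝ) (hF : (F.card : ℝ) / 2 ^ n ≤ r) :
    coinMeasure n S ≤ ENNReal.ofReal r := by
  classical
  calc coinMeasure n S ≤ coinMeasure n ↑F := measure_mono hSF
    _ = ENNReal.ofReal (((↑F : Set (Fin n → Bool)).toFinset.card : ℝ) / 2 ^ n) :=
        coin_eq n _
    _ ≤ ENNReal.ofReal r := by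
        apply ENNReal.ofReal_le_ofReal
        rwa [Finset.toFinset_coe]

lemma pair (n : ℕ) (hn1 : 0 < n) (k j : Fin n) (hj : j.val ≠ 0) :
    dftF n k j + dftF n k (-j) =
      ((2 * Real.cos (2 * Real.pi * k.val * j.val / n) : ℝ) : ℂ) := by
  have hnez : (n : ℂ) ≠ 0 := by exact_mod_cast hn1.ne'
  have hjv : ((-j).val : ℕ) = n - j.val := by
    rw [Fin.coe_neg, Nat.mod_eq_of_lt]
    omega
  have hjle : j.val ≤ n := j.isLt.le
  set θ : ℝ := 2 * Real.pi * k.val * j.val / n with hθ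
  have h1 : dftF n k j = Complex.exp (-(θ:ℂ) * Complex.I) := by
    rw [dftF]; congr 1; rw [hθ]; push_cast; field_simp
  have h2 : dftF n k (-j) = Complex.exp ((θ:ℂ) * Complex.I) := by
    rw [dftF, hjv]
    have hcast : ((n - j.val : ℕ) : ℂ) = (n : ℂ) - (j.val : ℂ) := by
      push_cast [hjle]; ring
    have hone : Complex.exp (((-(k.val : ℤ) : ℤ) : ℂ) * (2 * Real.pi * Complex.I)) = 1 :=
      Complex.exp_int_mul_two_pi_mul_I _
    have h3 : -2 * (Real.pi : ℂ) * Complex.I * (k.val : ℕ) * ((n - j.val : ℕ) : ℂ) / n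
        = ((-(k.val : ℤ) : ℤ) : ℂ) * (2 * Real.pi * Complex.I) + (θ:ℂ) * Complex.I := by
      rw [hcast, hθ]; push_cast; field_simp; ring
    rw [h3, Complex.exp_add, hone, one_mul]
  rw [h1, h2, add_comm, ← Complex.two_cos]
  push_cast [Complex.ofReal_cos]
  ring

noncomputable def cc (n : ℕ) (k j : Fin n) : ℝ :=
  2 * Real.cos (2 * Real.pi * k.val * j.val / n)

def eps (b : Bool) : ℝ := if b then 1 else -1

def KK (n : ℕ) : Finset (Fin n) := univ.filter (fun j => j.val ≠ 0 ∧ 2 * j.val < n)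

lemma gEq (n : ℕ) (hn : n % 2 = 1) (k : Fin n) (x : Fin n → Bool) :
    ∑ j, dftF n k j * (pmSign n x j : ℂ) =
      ((1 + ∑ j ∈ KK n, cc n k j * eps (x j) : ℝ) : ℂ) := by
  classical
  haveI : NeZero n := ⟨by omega⟩
  have hvneg : ∀ j : Fin n, j.val ≠ 0 → ((-j).val : ℕ) = n - j.val := by
    intro j hj
    rw [Fin.coe_neg, Nat.mod_eq_of_lt]; omega
  rw [← Finset.add_sum_erase univ _ (mem_univ (0 : Fin n))]
  have h00 : dftF n k 0 * (pmSign n x 0 : ℂ) = 1 := by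
    simp [dftF, pmSign]
  rw [h00]
  have hsplit : (univ.erase (0 : Fin n)) =
      KK n ∪ univ.filter (fun j : Fin n => j.val ≠ 0 ∧ n < 2 * j.val) := by
    ext j
    simp only [mem_erase, mem_univ, and_true, KK, mem_union, mem_filter, true_and]
    constructor
    · intro h
      have h1 : j.val ≠ 0 := fun h' => h (Fin.ext (by simp [h']))
      have := j.isLt
      omega
    · rintro (⟨h1, _⟩ | ⟨h1, _⟩) <;> exact fun h' => h1 (by simp [h'])
  have hdisj : Disjoint (KK n)
      (univ.filter (fun j : Fin n => j.val ≠ 0 ∧ n < 2 * j.val)) := by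
    rw [Finset.disjoint_left]
    intro j hj hj'
    simp only [KK, mem_filter] at hj hj'
    omega
  rw [hsplit, Finset.sum_union hdisj]
  have hre : ∑ j ∈ univ.filter (fun j : Fin n => j.val ≠ 0 ∧ n < 2 * j.val),
      dftF n k j * (pmSign n x j : ℂ)
      = ∑ j ∈ KK n, dftF n k (-j) * (pmSign n x (-j) : ℂ) := by
    refine Finset.sum_nbij' (fun j => -j) (fun j => -j) ?_ ?_ ?_ ?_ ?_
    · intro j hj
      simp only [mem_filter, mem_univ, true_and] at hj
      have h1 := hvneg j hj.1
      simp only [KK, mem_filter, mem_univ, true_and, h1]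
      omega
    · intro j hj
      simp only [KK, mem_filter, mem_univ, true_and] at hj
      have h1 := hvneg j hj.1
      simp only [mem_filter, mem_univ, true_and, h1]
      omega
    · intro j _; exact neg_neg j
    · intro j _; exact neg_neg j
    · intro j _; simp
  rw [hre, ← Finset.sum_add_distrib]
  have hterm : ∀ j ∈ KK n,
      dftF n k j * (pmSign n x j : ℂ) + dftF n k (-j) * (pmSign n x (-j) : ℂ)
      = ((cc n k j * eps (x j) : ℝ) : ℂ) := by
    intro j hj
    simp only [KK, mem_filter, mem_univ, true_and] at hj
    have h1 := hvneg j hj.1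
    have hp1 : pmSign n x j = eps (x j) := by
      simp [pmSign, hj.1, hj.2, eps]
    have hp2 : pmSign n x (-j) = eps (x j) := by
      have hne : (-j).val ≠ 0 := by rw [h1]; omega
      have hlt : ¬ (2 * (-j).val < n) := by rw [h1]; omega
      simp [pmSign, hne, hlt, eps, neg_neg]
    rw [hp1, hp2, ← add_mul, pair n (by omega) k j hj.1, ← Complex.ofReal_mul]
    rfl
  rw [Finset.sum_congr rfl hterm]
  push_cast
  ring

lemma sum_prod_bool {n : ℕ} (K : Finset (Fin n)) (f : Fin n → Bool → ℝ) :
    ∑ x : Fin n → Bool, ∏ j ∈ K, f j (x j)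
      = 2 ^ (n - K.card) * ∏ j ∈ K, (f j true + f j false) := by
  classical
  have h1 : ∀ x : Fin n → Bool,
      ∏ j ∈ K, f j (x j) = ∏ j, (if j ∈ K then f j (x j) else 1) := by
    intro x
    rw [← Finset.prod_filter, Finset.filter_univ_mem]
  simp_rw [h1]
  have h2 := Finset.sum_prod_piFinset (univ : Finset Bool)
    (fun j b => if j ∈ K then f j b else (1:ℝ))
  rw [Fintype.piFinset_univ] at h2
  rw [h2]
  have h3 : ∀ j : Fin n, ∑ b : Bool, (if j ∈ K then f j b else (1:ℝ))
      = if j ∈ K then f j true + f j false else 2 := by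
    intro j
    by_cases h : j ∈ K <;> simp [h, Fintype.sum_bool]
  rw [Finset.prod_congr rfl (fun j _ => h3 j), Finset.prod_ite, Finset.prod_const,
    Finset.filter_univ_mem, Finset.filter_not, Finset.filter_univ_mem]
  rw [Finset.card_univ_diff]
  simp [mul_comm]

lemma chernoff_count {n : ℕ} (K : Finset (Fin n)) (c : Fin n → ℝ)
    (hc : ∀ j ∈ K, |c j| ≤ 2) (hK : 2 * K.card ≤ n) (a t : ℝ) (ht : 0 ≤ t) :
    ((univ.filter (fun x : Fin n → Bool =>
        a < |∑ j ∈ K, c j * eps (x j)|)).card : ℝ)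
      ≤ 2 * 2 ^ n * Real.exp (t ^ 2 * n - t * a) := by
  classical
  set S : (Fin n → Bool) → ℝ := fun x => ∑ j ∈ K, c j * eps (x j) with hS
  set bad := univ.filter (fun x : Fin n → Bool => a < |S x|) with hbad
  have key : ∀ x ∈ bad, Real.exp (t * a) ≤ Real.exp (t * S x) + Real.exp (-(t * S x)) := by
    intro x hx
    rw [hbad, mem_filter] at hx
    have h1 : t * a ≤ t * |S x| := by nlinarith [hx.2]
    have h2 : Real.exp (t * |S x|) ≤ Real.exp (t * S x) + Real.exp (-(t * S x)) := by
      rcases abs_choice (S x) with h | h <;> rw [h]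
      · nlinarith [Real.exp_pos (-(t * S x))]
      · rw [mul_neg]
        nlinarith [Real.exp_pos (t * S x)]
    calc Real.exp (t * a) ≤ Real.exp (t * |S x|) := Real.exp_le_exp.mpr h1
      _ ≤ _ := h2
  have step1 : (bad.card : ℝ) * Real.exp (t * a)
      ≤ ∑ x : Fin n → Bool, (Real.exp (t * S x) + Real.exp (-(t * S x))) := by
    calc (bad.card : ℝ) * Real.exp (t * a) = ∑ _x ∈ bad, Real.exp (t * a) := by
          rw [Finset.sum_const, nsmul_eq_mul]
      _ ≤ ∑ x ∈ bad, (Real.exp (t * S x) + Real.exp (-(t * S x))) :=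
          Finset.sum_le_sum key
      _ ≤ ∑ x : Fin n → Bool, (Real.exp (t * S x) + Real.exp (-(t * S x))) := by
          apply Finset.sum_le_sum_of_subset_of_nonneg (Finset.subset_univ _)
          intro x _ _; positivity
  have expand : ∀ s : ℝ, ∑ x : Fin n → Bool, Real.exp (s * S x)
      = 2 ^ (n - K.card) * ∏ j ∈ K, (Real.exp (s * c j) + Real.exp (-(s * c j))) := by
    intro s
    have h4 : ∀ x : Fin n → Bool, Real.exp (s * S x)
        = ∏ j ∈ K, Real.exp (s * c j * eps (x j)) := by
      intro x
      rw [hS, Finset.mul_sum, Real.exp_sum]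
      exact Finset.prod_congr rfl (fun j _ => by ring_nf)
    simp_rw [h4]
    rw [sum_prod_bool K (fun j b => Real.exp (s * c j * eps b))]
    congr 1
    refine Finset.prod_congr rfl (fun j _ => ?_)
    simp [eps]
  have prodbound : ∏ j ∈ K, (Real.exp (t * c j) + Real.exp (-(t * c j)))
      ≤ 2 ^ K.card * Real.exp (t ^ 2 * n) := by
    have hcosh : ∀ j ∈ K, Real.exp (t * c j) + Real.exp (-(t * c j))
        ≤ 2 * Real.exp ((t * c j) ^ 2 / 2) := by
      intro j _
      have := Real.cosh_le_exp_half_sq (t * c j)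
      rw [Real.cosh_eq] at this
      linarith
    calc ∏ j ∈ K, (Real.exp (t * c j) + Real.exp (-(t * c j)))
        ≤ ∏ j ∈ K, 2 * Real.exp ((t * c j) ^ 2 / 2) :=
          Finset.prod_le_prod (fun j _ => by positivity) hcosh
      _ = 2 ^ K.card * Real.exp (∑ j ∈ K, (t * c j) ^ 2 / 2) := by
          rw [Finset.prod_mul_distrib, Finset.prod_const, Real.exp_sum]
      _ ≤ 2 ^ K.card * Real.exp (t ^ 2 * n) := by
          apply mul_le_mul_of_nonneg_left _ (by positivity)
          apply Real.exp_le_exp.mpr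
          calc ∑ j ∈ K, (t * c j) ^ 2 / 2 ≤ ∑ _j ∈ K, 2 * t ^ 2 := by
                apply Finset.sum_le_sum
                intro j hj
                have h2 := abs_le.mp (hc j hj)
                have hc2 : (c j) ^ 2 ≤ 4 := by nlinarith
                nlinarith [sq_nonneg t, mul_pow t (c j) 2]
            _ = K.card * (2 * t ^ 2) := by rw [Finset.sum_const, nsmul_eq_mul]
            _ ≤ t ^ 2 * n := by
                have : (2 * K.card : ℝ) ≤ n := by exact_mod_cast hK
                nlinarith [sq_nonneg t]
  have step2 : ∑ x : Fin n → Bool, (Real.exp (t * S x) + Real.exp (-(t * S x)))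
      ≤ 2 * 2 ^ n * Real.exp (t ^ 2 * n) := by
    rw [Finset.sum_add_distrib, expand t]
    have hneg : ∑ x : Fin n → Bool, Real.exp (-(t * S x))
        = 2 ^ (n - K.card) * ∏ j ∈ K, (Real.exp (-t * c j) + Real.exp (-(-t * c j))) := by
      rw [← expand (-t)]
      exact Finset.sum_congr rfl (fun x _ => by ring_nf)
    rw [hneg]
    have hneg2 : ∏ j ∈ K, (Real.exp (-t * c j) + Real.exp (-(-t * c j)))
        = ∏ j ∈ K, (Real.exp (t * c j) + Real.exp (-(t * c j))) := by
      refine Finset.prod_congr rfl (fun j _ => ?_)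
      rw [neg_mul, neg_neg, add_comm]
    rw [hneg2]
    have h2pow : (2:ℝ) ^ (n - K.card) * 2 ^ K.card = 2 ^ n := by
      rw [← pow_add]; congr 1; omega
    nlinarith [prodbound, pow_pos (by norm_num : (0:ℝ) < 2) (n - K.card),
      Real.exp_pos (t^2*n), mul_le_mul_of_nonneg_left prodbound
        (le_of_lt (pow_pos (by norm_num : (0:ℝ) < 2) (n - K.card)))]
  have hfin := le_trans step1 step2
  rw [Real.exp_sub, ← mul_div_assoc, le_div_iff₀ (Real.exp_pos (t * a))]
  exact hfin

lemma KK_card (n : ℕ) (hn : n % 2 = 1) : 2 * (KK n).card ≤ n := by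
  have h : (KK n).card ≤ (Finset.Ico 1 ((n+1)/2)).card := by
    apply Finset.card_le_card_of_injOn (fun j => j.val)
    · intro j hj
      simp only [KK, Finset.mem_coe, mem_filter, mem_univ, true_and] at hj
      simp only [Finset.mem_coe, Finset.mem_Ico]
      omega
    · intro a _ b _ hab
      exact Fin.ext hab
  rw [Nat.card_Ico] at h
  omega

end DftTail

/-- Union bound: the sup-norm of the Fourier transform of a random symmetric sign
vector exceeds `1 + 4√(n log n)` with probability at most `2/n`. -/
theorem dft_sup_tail_bound (n : ℕ) (hn : n % 2 = 1) :
    coinMeasure n {x | ∃ k : Fin n, 1 + 4 * Real.sqrt (n * Real.log n) <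
        ‖∑ j, dftF n k j * (pmSign n x j : ℂ)‖} ≤
      ENNReal.ofReal (2 / (n : ℝ)) := by
  classical
  open DftTail Finset in
  rcases eq_or_lt_of_le (by omega : 1 ≤ n) with h1 | h3
  · -- n = 1 : bound by total mass
    have hprob : coinMeasure n Set.univ = 1 := by
      rw [coinMeasure]
      exact measure_univ
    calc coinMeasure n _ ≤ coinMeasure n Set.univ := measure_mono (Set.subset_univ _)
      _ = 1 := hprob
      _ ≤ ENNReal.ofReal (2 / (n : ℝ)) := by
          rw [← h1]
          norm_num
  · -- n ≥ 3 (odd, > 1)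
    have hn3 : 3 ≤ n := by omega
    have hN1 : (1:ℝ) < n := by exact_mod_cast (by omega : 1 < n)
    have hN0 : (0:ℝ) < n := by linarith
    have hL : 0 < Real.log n := Real.log_pos hN1
    set L := Real.log n with hLdef
    set a : ℝ := 4 * Real.sqrt (n * L) with hadef
    have hnL : 0 < (n:ℝ) * L := by positivity
    have ha : 0 < a := by
      rw [hadef]; positivity
    set t : ℝ := a / (2 * n) with htdef
    have ht : 0 < t := by rw [htdef]; positivity
    have ha2 : a ^ 2 = 16 * (n * L) := by
      rw [hadef, mul_pow, Real.sq_sqrt hnL.le]; ring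
    have hexp : Real.exp (t ^ 2 * n - t * a) = ((n:ℝ) ^ 4)⁻¹ := by
      have h1 : t ^ 2 * n - t * a = -(4 * L) := by
        rw [htdef]
        have hne : (n:ℝ) ≠ 0 := hN0.ne'
        field_simp
        nlinarith [ha2]
      rw [h1, Real.exp_neg, hLdef]
      congr 1
      rw [show (4:ℝ) * Real.log n = ((4:ℕ):ℝ) * Real.log n by norm_num,
        Real.exp_nat_mul, Real.exp_log hN0]
    -- the bad finset
    set F : Finset (Fin n → Bool) := univ.filter (fun x =>
      ∃ k : Fin n, a < |∑ j ∈ KK n, cc n k j * eps (x j)|) with hF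
    -- the event is contained in F
    have hsub : {x : Fin n → Bool | ∃ k : Fin n, 1 + a <
        ‖∑ j, dftF n k j * (pmSign n x j : ℂ)‖} ⊆ ↑F := by
      intro x hx
      obtain ⟨k, hk⟩ := hx
      rw [gEq n hn k x, Complex.norm_real, Real.norm_eq_abs] at hk
      have habs : |1 + ∑ j ∈ KK n, cc n k j * eps (x j)|
          ≤ 1 + |∑ j ∈ KK n, cc n k j * eps (x j)| := by
        calc |1 + ∑ j ∈ KK n, cc n k j * eps (x j)|
            ≤ |(1:ℝ)| + |∑ j ∈ KK n, cc n k j * eps (x j)| := abs_add_le _ _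
          _ = 1 + |∑ j ∈ KK n, cc n k j * eps (x j)| := by rw [abs_one]
      rw [Finset.mem_coe, hF, Finset.mem_filter]
      exact ⟨Finset.mem_univ x, k, by linarith⟩
    -- union bound on the cardinality of F
    have hcard : (F.card : ℝ) ≤ n * (2 * 2 ^ n * ((n:ℝ) ^ 4)⁻¹) := by
      have hbU : F ⊆ univ.biUnion (fun k : Fin n =>
          univ.filter (fun x => a < |∑ j ∈ KK n, cc n k j * eps (x j)|)) := by
        intro x hx
        rw [hF, mem_filter] at hx
        obtain ⟨k, hk⟩ := hx.2
        exact Finset.mem_biUnion.mpr ⟨k, mem_univ k, by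
          rw [mem_filter]; exact ⟨mem_univ x, hk⟩⟩
      have h1 : F.card ≤ ∑ k : Fin n, (univ.filter (fun x : Fin n → Bool =>
          a < |∑ j ∈ KK n, cc n k j * eps (x j)|)).card :=
        le_trans (Finset.card_le_card hbU) (Finset.card_biUnion_le)
      have h2 : ∀ k : Fin n, ((univ.filter (fun x : Fin n → Bool =>
          a < |∑ j ∈ KK n, cc n k j * eps (x j)|)).card : ℝ)
          ≤ 2 * 2 ^ n * ((n:ℝ) ^ 4)⁻¹ := by
        intro k
        have := chernoff_count (KK n) (cc n k)
          (fun j _ => by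
            rw [cc, abs_mul, abs_two]
            nlinarith [Real.abs_cos_le_one (2 * Real.pi * k.val * j.val / n),
              abs_nonneg (Real.cos (2 * Real.pi * k.val * j.val / n))])
          (KK_card n hn) a t ht.le
        rwa [hexp] at this
      calc (F.card : ℝ) ≤ ∑ k : Fin n, ((univ.filter (fun x : Fin n → Bool =>
            a < |∑ j ∈ KK n, cc n k j * eps (x j)|)).card : ℝ) := by
            exact_mod_cast h1
        _ ≤ ∑ _k : Fin n, 2 * 2 ^ n * ((n:ℝ) ^ 4)⁻¹ := Finset.sum_le_sum (fun k _ => h2 k)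
        _ = n * (2 * 2 ^ n * ((n:ℝ) ^ 4)⁻¹) := by
            rw [Finset.sum_const, nsmul_eq_mul, card_univ, Fintype.card_fin]
    refine coin_le n _ F hsub _ ?_
    rw [div_le_div_iff₀ (by positivity) hN0]
    have hpow : (0:ℝ) < 2 ^ n := by positivity
    have hn2 : (1:ℝ) ≤ (n:ℝ)^2 := by nlinarith
    have key : (n:ℝ) * (2 * 2 ^ n * ((n:ℝ) ^ 4)⁻¹) * n ≤ 2 * 2 ^ n := by
      rw [show (n:ℝ) * (2 * 2 ^ n * ((n:ℝ) ^ 4)⁻¹) * n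
          = 2 * 2 ^ n * ((n:ℝ)^2 * ((n:ℝ)^4)⁻¹) by ring]
      have h4 : (n:ℝ)^2 * ((n:ℝ)^4)⁻¹ ≤ 1 := by
        rw [← div_eq_mul_inv, div_le_one (by positivity)]
        nlinarith
      nlinarith
    nlinarith [mul_le_mul_of_nonneg_right hcard hN0.le]
end

section
/- Let G be a dense random circulant graph on n vertices (n odd). Then with probability at least 1 − 2/n, ϑ(G) ≤ 1 + 4√(n log n). -/
open MeasureTheory ProbabilityTheory
open scoped BigOperators

/-- The dense random circulant graph determined by the coin flips `x`: the vertex `i`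
is adjacent to `j` iff `b (j - i) = -1`, where `b = pmSign n x`. -/
def randCircGraph (n : ℕ) (x : Fin n → Bool) : SimpleGraph (Fin n) :=
  SimpleGraph.fromRel (fun i j => pmSign n x (j - i) = -1)

open Real

section basic
variable {n : ℕ} (x : Fin n → Bool)

lemma pmSign_zero {k : Fin n} (h0 : k.val = 0) : pmSign n x k = 1 := by
  simp [pmSign, h0]

lemma pmSign_cases (k : Fin n) : pmSign n x k = 1 ∨ pmSign n x k = -1 := by
  unfold pmSign; split_ifs <;> simp

lemma neg_val {k : Fin n} (hk : k.val ≠ 0) : (-k).val = n - k.val := by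
  have h1 : k.val < n := k.isLt
  rw [Fin.neg_def]
  show (n - k.val) % n = n - k.val
  exact Nat.mod_eq_of_lt (by omega)

lemma pmSign_neg (hn : n % 2 = 1) (k : Fin n) : pmSign n x (-k) = pmSign n x k := by
  rcases eq_or_ne k.val 0 with h0 | h0
  · have hk : -k = k := by
      ext
      rw [Fin.neg_def]
      show (n - k.val) % n = k.val
      simp [h0]
    rw [hk]
  · have hlt : k.val < n := k.isLt
    have hval : (-k).val = n - k.val := neg_val h0
    have h2 : 2 * k.val ≠ n := by omega
    unfold pmSign
    rw [neg_neg]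
    split_ifs <;> first | rfl | omega

end basic

noncomputable def ang (n j : ℕ) (m : ℤ) : ℝ := 2 * Real.pi * j * m / n

section angle
variable {n : ℕ} (hn : 0 < n)

lemma ang_add (j : ℕ) (m m' : ℤ) : ang n j (m + m') = ang n j m + ang n j m' := by
  unfold ang; push_cast; ring

lemma ang_sub (j : ℕ) (m m' : ℤ) : ang n j (m - m') = ang n j m - ang n j m' := by
  unfold ang; push_cast; ring

lemma ang_neg (j : ℕ) (m : ℤ) : ang n j (-m) = -ang n j m := by
  unfold ang; push_cast; ring

include hn in
lemma cos_ang_congr (j : ℕ) {m m' : ℤ} (h : (n : ℤ) ∣ (m' - m)) :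
    Real.cos (ang n j m') = Real.cos (ang n j m) := by
  obtain ⟨c, hc⟩ := h
  have hm' : m' = m + n * c := by linarith [hc]
  subst hm'
  have : ang n j (m + n * c) = ang n j m + (j * c) * (2 * Real.pi) := by
    unfold ang
    have hn' : (n : ℝ) ≠ 0 := Nat.cast_ne_zero.mpr hn.ne'
    field_simp
    push_cast
    ring
  rw [this]
  exact_mod_cast Real.cos_add_int_mul_two_pi _ (j * c)

include hn in
lemma cos_ang_sum (m : ℤ) :
    ∑ j : Fin n, Real.cos (ang n j.val m) = if (n : ℤ) ∣ m then (n : ℝ) else 0 := by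
  by_cases hd : (n : ℤ) ∣ m
  · rw [if_pos hd]
    obtain ⟨c, hc⟩ := hd
    have : ∀ j : Fin n, Real.cos (ang n j.val m) = 1 := by
      intro j
      have : ang n j.val m = (j.val * c) * (2 * Real.pi) := by
        unfold ang
        rw [hc]
        have hn' : (n : ℝ) ≠ 0 := Nat.cast_ne_zero.mpr hn.ne'
        field_simp
        push_cast
        ring
      rw [this]
      exact_mod_cast Real.cos_int_mul_two_pi (j.val * c)
    simp [this, Finset.card_univ]
  · rw [if_neg hd]
    -- complex geometric sum
    set z : ℂ := Complex.exp ((2 * Real.pi * m / n : ℝ) * Complex.I) with hz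
    have hzpow : ∀ j : ℕ, z ^ j = Complex.exp ((2 * Real.pi * m * j / n : ℝ) * Complex.I) := by
      intro j
      rw [hz, ← Complex.exp_nat_mul]
      congr 1
      push_cast
      ring
    have hzn : z ^ n = 1 := by
      rw [hzpow]
      have : ((2 * Real.pi * m * n / n : ℝ) : ℂ) * Complex.I = (m : ℤ) * (2 * Real.pi * Complex.I) := by
        have hn' : (n : ℂ) ≠ 0 := Nat.cast_ne_zero.mpr hn.ne'
        push_cast
        field_simp
      rw [this]
      exact Complex.exp_int_mul_two_pi_mul_I m
    have hz1 : z ≠ 1 := by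
      intro h
      rw [hz, Complex.exp_eq_one_iff] at h
      obtain ⟨k, hk⟩ := h
      apply hd
      refine ⟨k, ?_⟩
      have him : (2 * Real.pi * m / n : ℝ) = k * (2 * Real.pi) := by
        have := congrArg Complex.im hk
        simpa using this
      have hn' : (n : ℝ) ≠ 0 := Nat.cast_ne_zero.mpr hn.ne'
      have hπ : Real.pi ≠ 0 := Real.pi_ne_zero
      field_simp at him
      have hm : (m : ℝ) = (n : ℝ) * k := by
        nlinarith [him, Real.pi_pos]
      exact_mod_cast hm
    have hre : ∀ j : ℕ, (z ^ j).re = Real.cos (ang n j m) := by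
      intro j
      rw [hzpow j, Complex.exp_ofReal_mul_I_re]
      congr 1
      unfold ang
      push_cast
      ring
    calc ∑ j : Fin n, Real.cos (ang n j.val m)
        = ∑ j ∈ Finset.range n, (z ^ j).re := by
          rw [Fin.sum_univ_eq_sum_range (fun j => Real.cos (ang n j m)) n]
          exact Finset.sum_congr rfl fun j _ => (hre j).symm
      _ = (∑ j ∈ Finset.range n, z ^ j).re := by
          rw [Complex.re_sum]
      _ = 0 := by
          rw [geom_sum_eq hz1, hzn]
          simp

end angle

noncomputable def lamb (n : ℕ) (x : Fin n → Bool) (j : ℕ) : ℝ :=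
  ∑ m : Fin n, pmSign n x m * Real.cos (ang n j m.val)

section inv
variable {n : ℕ}

lemma neg_val_zero {d : Fin n} (h0 : d.val = 0) : (-d).val = 0 := by
  rw [Fin.neg_def]
  show (n - d.val) % n = 0
  simp [h0]

lemma dvd_sub_iff (m d : Fin n) : (n : ℤ) ∣ ((m.val : ℤ) - d.val) ↔ m = d := by
  constructor
  · intro h
    have h1 : (m.val : ℤ) - d.val = 0 := by
      refine Int.eq_zero_of_abs_lt_dvd h (abs_lt.mpr ⟨?_, ?_⟩)
      · have := d.isLt; omega
      · have := m.isLt; omega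
    ext
    omega
  · rintro rfl; simp

lemma dvd_add_iff (hpos : 0 < n) (m d : Fin n) :
    (n : ℤ) ∣ ((m.val : ℤ) + d.val) ↔ m = -d := by
  constructor
  · intro h
    obtain ⟨c, hc⟩ := h
    have hc0 : 0 ≤ c := by nlinarith [hc, m.isLt, d.isLt]
    have hc2 : c < 2 := by nlinarith [hc, m.isLt, d.isLt]
    interval_cases c
    · have hm : m.val = 0 ∧ d.val = 0 := by omega
      ext
      rw [neg_val_zero hm.2, hm.1]
    · have hd0 : d.val ≠ 0 := by omega
      ext
      rw [neg_val hd0]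
      omega
  · rintro rfl
    rcases eq_or_ne d.val 0 with h0 | h0
    · rw [neg_val_zero h0, h0]; simp
    · rw [neg_val h0]
      refine ⟨1, ?_⟩
      have := d.isLt
      omega

theorem lamb_inversion (hn : n % 2 = 1) (x : Fin n → Bool) (d : Fin n) :
    ∑ j : Fin n, lamb n x j.val * Real.cos (ang n j.val d.val) = n * pmSign n x d := by
  have hpos : 0 < n := Nat.pos_of_ne_zero (by rintro rfl; simp at hn)
  unfold lamb
  calc ∑ j : Fin n, (∑ m : Fin n, pmSign n x m * Real.cos (ang n j.val m.val)) *
        Real.cos (ang n j.val d.val)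
      = ∑ m : Fin n, pmSign n x m *
          ∑ j : Fin n, Real.cos (ang n j.val m.val) * Real.cos (ang n j.val d.val) := by
        simp_rw [Finset.sum_mul, Finset.mul_sum]
        rw [Finset.sum_comm]
        congr 1; ext m; congr 1; ext j; ring
    _ = ∑ m : Fin n, pmSign n x m *
          (((if m = d then (n:ℝ) else 0) + (if m = -d then (n:ℝ) else 0)) / 2) := by
        congr 1; ext m
        congr 1
        have : ∀ j : Fin n, Real.cos (ang n j.val m.val) * Real.cos (ang n j.val d.val)
            = (Real.cos (ang n j.val ((m.val : ℤ) - d.val))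
               + Real.cos (ang n j.val ((m.val : ℤ) + d.val))) / 2 := by
          intro j
          rw [ang_sub, ang_add]
          have := Real.two_mul_cos_mul_cos (ang n j.val m.val) (ang n j.val d.val)
          linarith
        simp_rw [this]
        rw [← Finset.sum_div, Finset.sum_add_distrib, cos_ang_sum hpos, cos_ang_sum hpos,
          if_congr (dvd_sub_iff m d) rfl rfl, if_congr (dvd_add_iff hpos m d) rfl rfl]
    _ = n * pmSign n x d := by
        have h1 : ∀ m : Fin n, pmSign n x m *
            (((if m = d then (n:ℝ) else 0) + (if m = -d then (n:ℝ) else 0)) / 2)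
            = ((if m = d then pmSign n x m * n else 0)
               + (if m = -d then pmSign n x m * n else 0)) / 2 := by
          intro m; split_ifs <;> ring
        simp_rw [h1]
        rw [← Finset.sum_div, Finset.sum_add_distrib,
          Finset.sum_ite_eq' Finset.univ d, Finset.sum_ite_eq' Finset.univ (-d)]
        simp only [Finset.mem_univ, if_true, pmSign_neg x hn d]
        ring

end inv


section partA
variable {n : ℕ}

lemma cos_ang_fin_sub (hpos : 0 < n) (j : ℕ) (i k : Fin n) :
    Real.cos (ang n j ((k - i).val : ℤ)) = Real.cos (ang n j ((k.val : ℤ) - i.val)) := by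
  apply cos_ang_congr hpos
  have h1 : ((k - i).val : ℤ) = ((k.val : ℤ) + (n - i.val)) % n := by
    rw [Fin.sub_def]
    show (((n - i.val + k.val) % n : ℕ) : ℤ) = _
    push_cast [Nat.cast_sub i.isLt.le]
    ring_nf
  have h2 : ((k.val : ℤ) + (n - i.val)) % n = ((k.val : ℤ) - i.val) % n := by
    have := Int.add_mul_emod_self_left (a := (k.val:ℤ) - i.val) (b := (n:ℤ)) (c := 1)
    rw [show (k.val : ℤ) + ((n:ℤ) - i.val) = ((k.val:ℤ) - i.val) + (n:ℤ) * 1 by ring, this]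
  rw [h1, h2]
  obtain ⟨q, hq⟩ : ∃ q, ((k.val:ℤ) - i.val) % n + (n:ℤ) * q = (k.val:ℤ) - i.val :=
    ⟨_, Int.emod_add_mul_ediv _ _⟩
  exact ⟨-q, by rw [mul_neg]; linarith⟩

theorem theta_le (hn : n % 2 = 1) (x : Fin n → Bool) {L : ℝ} (hL : 0 ≤ L)
    (hlam : ∀ j : Fin n, lamb n x j.val ≤ L) :
    lovaszTheta (randCircGraph n x) ≤ L := by
  have hpos : 0 < n := Nat.pos_of_ne_zero (by rintro rfl; simp at hn)
  have hnR : (0:ℝ) < n := by exact_mod_cast hpos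
  apply Real.sSup_le _ hL
  rintro t ⟨X, hPSD, htr, hadj, rfl⟩
  set Q : Fin n → ℝ := fun j => ∑ i, ∑ k, X i k *
    Real.cos (ang n j.val ((k.val : ℤ) - i.val)) with hQdef
  have hdot : ∀ w : Fin n → ℝ, 0 ≤ ∑ i, w i * ∑ k, X i k * w k := by
    intro w
    have h2 := hPSD.dotProduct_mulVec_nonneg w
    have : dotProduct (star w) (X.mulVec w) = ∑ i, w i * ∑ k, X i k * w k := by
      simp [dotProduct, Matrix.mulVec]
    rwa [this] at h2
  have hQnonneg : ∀ j, 0 ≤ Q j := by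
    intro j
    set u : Fin n → ℝ := fun i => Real.cos (ang n j.val i.val) with hu
    set v : Fin n → ℝ := fun i => Real.sin (ang n j.val i.val) with hv
    have h1 : Q j = (∑ i, u i * ∑ k, X i k * u k) + (∑ i, v i * ∑ k, X i k * v k) := by
      rw [hQdef]
      simp_rw [ang_sub, Real.cos_sub]
      rw [← Finset.sum_add_distrib]
      apply Finset.sum_congr rfl
      intro i _
      rw [Finset.mul_sum, Finset.mul_sum, ← Finset.sum_add_distrib]
      apply Finset.sum_congr rfl
      intro k _
      simp only [hu, hv]
      ring
    rw [h1]
    exact add_nonneg (hdot u) (hdot v)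
  have hQsum : ∑ j, Q j = n := by
    have swap : ∑ j : Fin n, Q j = ∑ i, ∑ k, X i k *
        ∑ j : Fin n, Real.cos (ang n j.val ((k.val : ℤ) - i.val)) := by
      rw [hQdef, Finset.sum_comm]
      apply Finset.sum_congr rfl
      intro i _
      rw [Finset.sum_comm]
      apply Finset.sum_congr rfl
      intro k _
      rw [Finset.mul_sum]
    rw [swap]
    have inner : ∀ i k : Fin n, X i k *
        (∑ j : Fin n, Real.cos (ang n j.val ((k.val : ℤ) - i.val)))
        = if k = i then X i k * n else 0 := by
      intro i k
      rw [cos_ang_sum hpos, if_congr (dvd_sub_iff k i) rfl rfl]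
      split_ifs <;> simp
    simp_rw [inner]
    have diag : ∀ i : Fin n, ∑ k, (if k = i then X i k * (n:ℝ) else 0) = X i i * n := by
      intro i
      rw [Finset.sum_ite_eq' Finset.univ i (fun k => X i k * (n:ℝ))]
      simp
    simp_rw [diag]
    rw [← Finset.sum_mul]
    have : ∑ i, X i i = 1 := by
      simpa [Matrix.trace, Matrix.diag] using htr
    rw [this, one_mul]
  have key : (n:ℝ) * (∑ i, ∑ k, X i k) = ∑ j : Fin n, lamb n x j.val * Q j := by
    have inv : ∀ i k : Fin n, (n:ℝ) * pmSign n x (k - i)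
        = ∑ j : Fin n, lamb n x j.val * Real.cos (ang n j.val ((k.val:ℤ) - i.val)) := by
      intro i k
      rw [← lamb_inversion hn x (k - i)]
      apply Finset.sum_congr rfl
      intro j _
      rw [cos_ang_fin_sub hpos]
    have step1 : ∀ i k, X i k = pmSign n x (k - i) * X i k := by
      intro i k
      rcases pmSign_cases x (k - i) with h | h
      · rw [h, one_mul]
      · have hadj' : (randCircGraph n x).Adj i k := by
          unfold randCircGraph
          rw [SimpleGraph.fromRel_adj]
          refine ⟨?_, Or.inl h⟩
          rintro rfl
          have h0 : (i - i : Fin n).val = 0 := by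
            rw [Fin.sub_def]
            show (n - i.val + i.val) % n = 0
            rw [show n - i.val + i.val = n from by omega, Nat.mod_self]
          rw [pmSign_zero x h0] at h
          norm_num at h
        rw [hadj i k hadj', mul_zero]
    calc (n:ℝ) * (∑ i, ∑ k, X i k)
        = ∑ i, ∑ k, ∑ j : Fin n, lamb n x j.val *
            Real.cos (ang n j.val ((k.val:ℤ) - i.val)) * X i k := by
          rw [Finset.mul_sum]
          apply Finset.sum_congr rfl
          intro i _
          rw [Finset.mul_sum]
          apply Finset.sum_congr rfl
          intro k _
          rw [← Finset.sum_mul, ← inv i k]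
          calc (n:ℝ) * X i k = (n:ℝ) * (pmSign n x (k - i) * X i k) := by
                rw [← step1 i k]
            _ = (n:ℝ) * pmSign n x (k - i) * X i k := by ring
      _ = ∑ i, ∑ j : Fin n, ∑ k, lamb n x j.val *
            Real.cos (ang n j.val ((k.val:ℤ) - i.val)) * X i k := by
          apply Finset.sum_congr rfl
          intro i _
          rw [Finset.sum_comm]
      _ = ∑ j : Fin n, ∑ i, ∑ k, lamb n x j.val *
            Real.cos (ang n j.val ((k.val:ℤ) - i.val)) * X i k := by
          rw [Finset.sum_comm]
      _ = ∑ j : Fin n, lamb n x j.val * Q j := by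
          apply Finset.sum_congr rfl
          intro j _
          simp only [hQdef]
          rw [Finset.mul_sum]
          apply Finset.sum_congr rfl
          intro i _
          rw [Finset.mul_sum]
          apply Finset.sum_congr rfl
          intro k _
          ring
  have hle : ∑ j : Fin n, lamb n x j.val * Q j ≤ L * n := by
    calc ∑ j : Fin n, lamb n x j.val * Q j ≤ ∑ j : Fin n, L * Q j := by
          apply Finset.sum_le_sum
          intro j _
          exact mul_le_mul_of_nonneg_right (hlam j) (hQnonneg j)
      _ = L * n := by rw [← Finset.mul_sum, hQsum]
  nlinarith [key, hle]

end partA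

def epsB (b : Bool) : ℝ := if b then 1 else -1

noncomputable def cc (n j : ℕ) (k : Fin n) : ℝ :=
  if 0 < k.val ∧ 2 * k.val < n then 2 * Real.cos (ang n j k.val) else 0

section partB
variable {n : ℕ}

lemma cc_sq_le (j : ℕ) (k : Fin n) : (cc n j k) ^ 2 ≤ 4 := by
  unfold cc
  split_ifs with h
  · have h1 := Real.neg_one_le_cos (ang n j k.val)
    have h2 := Real.cos_le_one (ang n j k.val)
    nlinarith
  · norm_num

lemma lamb_eq (hn : n % 2 = 1) (x : Fin n → Bool) (j : ℕ) :
    lamb n x j = 1 + ∑ k : Fin n, cc n j k * epsB (x k) := by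
  have hpos : 0 < n := Nat.pos_of_ne_zero (by rintro rfl; simp at hn)
  haveI : NeZero n := ⟨hpos.ne'⟩
  have point : ∀ m : Fin n, pmSign n x m * Real.cos (ang n j m.val)
      = (if m = (⟨0, hpos⟩ : Fin n) then (1:ℝ) else 0)
        + cc n j m * epsB (x m) / 2 + cc n j (-m) * epsB (x (-m)) / 2 := by
    intro m
    rcases eq_or_ne m.val 0 with h0 | h0
    · have hm : m = (⟨0, hpos⟩ : Fin n) := by ext; exact h0
      have hneg : (-m).val = 0 := neg_val_zero h0
      rw [pmSign_zero x h0, if_pos hm]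
      unfold cc
      rw [if_neg (by omega), if_neg (by omega)]
      have : ang n j m.val = 0 := by unfold ang; rw [h0]; simp
      rw [this, Real.cos_zero]
      ring
    · have hlt : m.val < n := m.isLt
      have h2n : 2 * m.val ≠ n := by omega
      have hneg : (-m).val = n - m.val := neg_val h0
      have hnegne : (-m).val ≠ 0 := by omega
      rw [if_neg (by intro hc; rw [hc] at h0; exact h0 rfl)]
      rcases lt_or_gt_of_ne h2n with hlt2 | hgt2
      · -- small case : pmSign = epsB (x m)
        have hpm : pmSign n x m = epsB (x m) := by
          unfold pmSign epsB
          rw [if_neg h0, if_pos hlt2]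
        have hcc : cc n j m = 2 * Real.cos (ang n j m.val) := by
          unfold cc; rw [if_pos ⟨by omega, hlt2⟩]
        have hcc2 : cc n j (-m) = 0 := by
          unfold cc; rw [if_neg (by rw [hneg]; omega)]
        rw [hpm, hcc, hcc2]
        ring
      · -- large case : pmSign = epsB (x (-m))
        have hpm : pmSign n x m = epsB (x (-m)) := by
          unfold pmSign epsB
          rw [if_neg h0, if_neg (by omega)]
        have hcc : cc n j m = 0 := by
          unfold cc; rw [if_neg (by omega)]
        have hcc2 : cc n j (-m) = 2 * Real.cos (ang n j m.val) := by
          unfold cc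
          rw [if_pos ⟨by omega, by omega⟩]
          congr 1
          rw [hneg]
          have e1 : Real.cos (ang n j ((n - m.val : ℕ) : ℤ)) = Real.cos (ang n j (-(m.val:ℤ))) := by
            apply cos_ang_congr hpos
            refine ⟨1, ?_⟩
            push_cast [Nat.cast_sub hlt.le]
            ring
          rw [e1, ang_neg, Real.cos_neg]
        rw [hpm, hcc, hcc2]
        ring
  unfold lamb
  simp_rw [point]
  rw [Finset.sum_add_distrib, Finset.sum_add_distrib]
  have e0 : ∑ m : Fin n, (if m = (⟨0, hpos⟩ : Fin n) then (1:ℝ) else 0) = 1 := by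
    rw [Finset.sum_ite_eq' Finset.univ]
    simp
  have ehalf : ∑ m : Fin n, cc n j m * epsB (x m) / 2
      = (∑ m : Fin n, cc n j m * epsB (x m)) / 2 := by
    rw [Finset.sum_div]
  have eneg : ∑ m : Fin n, cc n j (-m) * epsB (x (-m)) / 2
      = ∑ m : Fin n, cc n j m * epsB (x m) / 2 := by
    apply Fintype.sum_equiv (Equiv.neg (Fin n))
    intro m
    simp
  rw [e0, eneg, ehalf]
  ring

theorem chernoff_count (N : ℕ) (c : Fin N → ℝ) (s t : ℝ) (hs : 0 ≤ s) :
    ((Finset.univ.filter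
        (fun x : Fin N → Bool => t ≤ ∑ k, c k * epsB (x k))).card : ℝ)
      ≤ 2 ^ N * Real.exp (s ^ 2 * (∑ k, (c k) ^ 2) / 2 - s * t) := by
  have hmain : ((Finset.univ.filter
        (fun x : Fin N → Bool => t ≤ ∑ k, c k * epsB (x k))).card : ℝ) * Real.exp (s * t)
      ≤ 2 ^ N * Real.exp (s ^ 2 * (∑ k, (c k) ^ 2) / 2) := by
    calc ((Finset.univ.filter
          (fun x : Fin N → Bool => t ≤ ∑ k, c k * epsB (x k))).card : ℝ) * Real.exp (s * t)
        = ∑ _x ∈ Finset.univ.filter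
            (fun x : Fin N → Bool => t ≤ ∑ k, c k * epsB (x k)), Real.exp (s * t) := by
          rw [Finset.sum_const, nsmul_eq_mul]
      _ ≤ ∑ x ∈ Finset.univ.filter
            (fun x : Fin N → Bool => t ≤ ∑ k, c k * epsB (x k)),
            Real.exp (s * ∑ k, c k * epsB (x k)) := by
          apply Finset.sum_le_sum
          intro x hx
          rw [Finset.mem_filter] at hx
          exact Real.exp_le_exp.mpr (mul_le_mul_of_nonneg_left hx.2 hs)
      _ ≤ ∑ x : Fin N → Bool, Real.exp (s * ∑ k, c k * epsB (x k)) := by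
          apply Finset.sum_le_sum_of_subset_of_nonneg (Finset.filter_subset _ _)
          intro x _ _
          exact (Real.exp_pos _).le
      _ = ∑ x : Fin N → Bool, ∏ k, Real.exp (s * (c k * epsB (x k))) := by
          apply Finset.sum_congr rfl
          intro x _
          rw [← Real.exp_sum, Finset.mul_sum]
      _ = ∏ k, ∑ b : Bool, Real.exp (s * (c k * epsB b)) := by
          rw [Finset.prod_univ_sum]
          rw [Fintype.piFinset_univ]
      _ ≤ ∏ k, 2 * Real.exp ((s * c k) ^ 2 / 2) := by
          apply Finset.prod_le_prod
          · intro k _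
            apply Finset.sum_nonneg
            intro b _
            exact (Real.exp_pos _).le
          · intro k _
            have : ∑ b : Bool, Real.exp (s * (c k * epsB b))
                = Real.exp (s * c k) + Real.exp (-(s * c k)) := by
              simp [epsB]
            rw [this]
            have hcosh := Real.cosh_le_exp_half_sq (s * c k)
            rw [Real.cosh_eq] at hcosh
            linarith
      _ = 2 ^ N * Real.exp (s ^ 2 * (∑ k, (c k) ^ 2) / 2) := by
          rw [Finset.prod_mul_distrib, Finset.prod_const, ← Real.exp_sum]
          simp only [Finset.card_univ, Fintype.card_fin]
          congr 1
          rw [← Finset.sum_div, Finset.mul_sum]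
          have hpt : ∀ k : Fin N, (s * c k) ^ 2 = s ^ 2 * c k ^ 2 := fun k => by ring
          simp_rw [hpt]
  have hexp : Real.exp (s ^ 2 * (∑ k, (c k) ^ 2) / 2 - s * t)
      = Real.exp (s ^ 2 * (∑ k, (c k) ^ 2) / 2) * (Real.exp (s * t))⁻¹ := by
    rw [Real.exp_sub]
    ring
  rw [hexp, ← mul_assoc]
  have hepos := Real.exp_pos (s * t)
  have h2 := (le_div_iff₀ hepos).mpr hmain
  rwa [div_eq_mul_inv] at h2

end partB


/-- For a dense random circulant graph on `n` vertices (`n` odd), with probability at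
least `1 - 2/n` we have `ϑ(G) ≤ 1 + 4√(n log n)`. -/
theorem lovaszTheta_randCircGraph_upper (n : ℕ) (hn : n % 2 = 1) :
    ENNReal.ofReal (1 - 2 / (n : ℝ)) ≤
      coinMeasure n {x | lovaszTheta (randCircGraph n x) ≤
        1 + 4 * Real.sqrt (n * Real.log n)} := by
  classical
  have hpos : 0 < n := Nat.pos_of_ne_zero (by rintro rfl; simp at hn)
  rcases eq_or_lt_of_le (Nat.one_le_iff_ne_zero.mpr hpos.ne') with h1 | h1
  · -- n = 1 : trivial
    rw [show (1:ℝ) - 2 / (n:ℝ) = -1 by rw [← h1]; norm_num]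
    rw [ENNReal.ofReal_of_nonpos (by norm_num)]
    exact zero_le
  have hn3 : 3 ≤ n := by omega
  have hnR : (0:ℝ) < n := by exact_mod_cast hpos
  have hlog : 0 ≤ Real.log n := Real.log_nonneg (by exact_mod_cast hpos)
  set t₀ : ℝ := 4 * Real.sqrt (n * Real.log n) with ht₀
  have ht₀nn : 0 ≤ t₀ := by positivity
  have ht₀sq : t₀ ^ 2 = 16 * ((n:ℝ) * Real.log n) := by
    rw [ht₀, mul_pow, Real.sq_sqrt (by positivity)]
    norm_num
  set L : ℝ := 1 + t₀ with hL
  have hLnn : (0:ℝ) ≤ L := by positivity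
  set s : ℝ := t₀ / (4 * n) with hsdef
  have hs : 0 ≤ s := by positivity
  -- per-frequency bad sets
  set badj : Fin n → Finset (Fin n → Bool) := fun j =>
    Finset.univ.filter (fun x : Fin n → Bool => t₀ ≤ ∑ k, cc n j.val k * epsB (x k)) with hbadj
  have hcardj : ∀ j : Fin n, ((badj j).card : ℝ) ≤ 2 ^ n * ((n:ℝ) ^ 2)⁻¹ := by
    intro j
    have hch := chernoff_count n (fun k => cc n j.val k) s t₀ hs
    have hSig : ∑ k : Fin n, (cc n j.val k) ^ 2 ≤ 4 * n := by
      calc ∑ k : Fin n, (cc n j.val k) ^ 2 ≤ ∑ _k : Fin n, (4:ℝ) :=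
            Finset.sum_le_sum fun k _ => cc_sq_le j.val k
        _ = 4 * n := by
            rw [Finset.sum_const, nsmul_eq_mul, Finset.card_univ, Fintype.card_fin]
            ring
    have hexp1 : s ^ 2 * (∑ k : Fin n, (cc n j.val k) ^ 2) / 2 - s * t₀
        ≤ -(2 * Real.log n) := by
      have h2 : s ^ 2 * (∑ k : Fin n, (cc n j.val k) ^ 2) / 2 ≤ s ^ 2 * (4 * n) / 2 := by
        apply div_le_div_of_nonneg_right ?_ (by norm_num)
        exact mul_le_mul_of_nonneg_left hSig (sq_nonneg s)
      have h3 : s ^ 2 * (4 * (n:ℝ)) / 2 - s * t₀ = -(2 * Real.log n) := by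
        have hn0 : (n:ℝ) ≠ 0 := hnR.ne'
        have e1 : s ^ 2 * (4 * (n:ℝ)) / 2 - s * t₀ = -(t₀ ^ 2 / (8 * n)) := by
          rw [hsdef]
          field_simp
          ring
        rw [e1, ht₀sq]
        field_simp
        ring
      linarith
    calc ((badj j).card : ℝ)
        ≤ 2 ^ n * Real.exp (s ^ 2 * (∑ k : Fin n, (cc n j.val k) ^ 2) / 2 - s * t₀) := hch
      _ ≤ 2 ^ n * Real.exp (-(2 * Real.log n)) := by
          apply mul_le_mul_of_nonneg_left (Real.exp_le_exp.mpr hexp1) (by positivity)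
      _ = 2 ^ n * ((n:ℝ) ^ 2)⁻¹ := by
          congr 1
          rw [Real.exp_neg]
          congr 1
          rw [two_mul, Real.exp_add, Real.exp_log hnR]
          ring
  -- global bad set
  set Bad : Finset (Fin n → Bool) :=
    Finset.univ.filter (fun x : Fin n → Bool => ¬ ∀ j : Fin n, lamb n x j.val ≤ L) with hBad
  have hBadsub : Bad ⊆ Finset.univ.biUnion badj := by
    intro x hx
    rw [hBad, Finset.mem_filter] at hx
    push_neg at hx
    obtain ⟨j, hj⟩ := hx.2
    apply Finset.mem_biUnion.mpr
    refine ⟨j, Finset.mem_univ j, ?_⟩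
    rw [hbadj]
    simp only [Finset.mem_filter, Finset.mem_univ, true_and]
    have := lamb_eq hn x j.val
    rw [this] at hj
    rw [hL] at hj
    linarith
  have hBadcard : (Bad.card : ℝ) ≤ 2 ^ n / n := by
    calc (Bad.card : ℝ) ≤ ((Finset.univ.biUnion badj).card : ℝ) := by
          exact_mod_cast Finset.card_le_card hBadsub
      _ ≤ ∑ j : Fin n, ((badj j).card : ℝ) := by
          exact_mod_cast Finset.card_biUnion_le
      _ ≤ ∑ _j : Fin n, (2:ℝ) ^ n * ((n:ℝ) ^ 2)⁻¹ := Finset.sum_le_sum fun j _ => hcardj j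
      _ = n * (2 ^ n * ((n:ℝ) ^ 2)⁻¹) := by
          rw [Finset.sum_const, nsmul_eq_mul, Finset.card_univ, Fintype.card_fin]
      _ = 2 ^ n / n := by
          field_simp
  -- good set
  set P : (Fin n → Bool) → Prop := fun x => ∀ j : Fin n, lamb n x j.val ≤ L with hP
  set GoodF : Finset (Fin n → Bool) := Finset.univ.filter P with hGoodF
  have hSsub : ↑GoodF ⊆ {x | lovaszTheta (randCircGraph n x) ≤ L} := by
    intro x hx
    rw [Finset.mem_coe, hGoodF, Finset.mem_filter] at hx
    exact theta_le hn x hLnn hx.2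
  have hcard2 : Fintype.card (Fin n → Bool) = 2 ^ n := by
    rw [Fintype.card_fun, Fintype.card_bool, Fintype.card_fin]
  have hμS : coinMeasure n ↑GoodF
      = (GoodF.card : ENNReal) * ((2:ENNReal) ^ n)⁻¹ := by
    rw [coinMeasure, PMF.toMeasure_apply_finset]
    have : ∀ x ∈ GoodF, (PMF.uniformOfFintype (Fin n → Bool)) x
        = ((2:ENNReal) ^ n)⁻¹ := by
      intro x _
      rw [PMF.uniformOfFintype_apply, hcard2]
      norm_cast
    rw [Finset.sum_congr rfl this, Finset.sum_const, nsmul_eq_mul]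
  have hcardGood : (GoodF.card : ℝ) = 2 ^ n - Bad.card := by
    have h2 := Finset.card_filter_add_card_filter_not
      (s := (Finset.univ : Finset (Fin n → Bool))) (p := P)
    rw [Finset.card_univ, hcard2] at h2
    have hBB : (Finset.univ.filter (fun x => ¬ P x)).card = Bad.card := rfl
    rw [hBB] at h2
    have := congrArg (fun m : ℕ => (m : ℝ)) h2
    push_cast at this
    linarith
  have hreal : (1 - 2 / (n:ℝ)) ≤ (GoodF.card : ℝ) / 2 ^ n := by
    have hp2 : (0:ℝ) < 2 ^ n := by positivity
    rw [le_div_iff₀ hp2, hcardGood]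
    have hfrac : (2:ℝ) ^ n / n ≤ 2 / n * 2 ^ n := by
      rw [div_le_iff₀ hnR]
      have e1 : (2:ℝ) / n * 2 ^ n * n = 2 * 2 ^ n := by field_simp
      rw [e1]
      nlinarith
    have e2 : (1 - 2 / (n:ℝ)) * 2 ^ n = 2 ^ n - 2 / n * 2 ^ n := by ring
    rw [e2]
    linarith [hBadcard]
  calc ENNReal.ofReal (1 - 2 / (n:ℝ))
      ≤ coinMeasure n ↑GoodF := by
        rw [hμS]
        have hp2 : (0:ℝ) < 2 ^ n := by positivity
        calc ENNReal.ofReal (1 - 2 / (n:ℝ))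
            ≤ ENNReal.ofReal ((GoodF.card : ℝ) / 2 ^ n) := ENNReal.ofReal_le_ofReal hreal
          _ = (GoodF.card : ENNReal) * ((2:ENNReal) ^ n)⁻¹ := by
              rw [ENNReal.ofReal_div_of_pos hp2, div_eq_mul_inv]
              congr 1
              · exact ENNReal.ofReal_natCast _
              · congr 1
                rw [show ((2:ℝ) ^ n) = ((2 ^ n : ℕ) : ℝ) by push_cast; ring]
                rw [ENNReal.ofReal_natCast]
                push_cast
                ring
    _ ≤ coinMeasure n {x | lovaszTheta (randCircGraph n x) ≤ L} := measure_mono hSsub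
end

section
/- Let G be a circulant graph on n vertices with adjacency matrix circulant. Then the Lovász theta number ϑ(G) equals the value of the linear program: maximize Σ_i x_i over x ∈ ℝⁿ subject to x_k = x_{n−k} for k ≠ 0, x₀ = 1, Fx ≥ 0 entrywise, and x_k = 0 for all k with (0,k) an edge of G, where F is the n×n DFT matrix. -/
open MeasureTheory ProbabilityTheory
open scoped BigOperators
open Complex Matrix

noncomputable def cexpE (n : ℕ) (t : ℤ) : ℂ := Complex.exp (2 * Real.pi * Complex.I * t / n)

lemma cexpE_add (n : ℕ) [NeZero n] (s t : ℤ) : cexpE n (s + t) = cexpE n s * cexpE n t := by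
  rw [cexpE, cexpE, cexpE, ← Complex.exp_add]
  congr 1
  have hn : (n : ℂ) ≠ 0 := Nat.cast_ne_zero.mpr (NeZero.ne n)
  push_cast
  ring

lemma cexpE_mul_self (n : ℕ) [NeZero n] (k : ℤ) : cexpE n ((n:ℤ) * k) = 1 := by
  rw [cexpE]
  have hn : (n : ℂ) ≠ 0 := Nat.cast_ne_zero.mpr (NeZero.ne n)
  have : 2 * (Real.pi:ℂ) * Complex.I * (((n:ℤ) * k : ℤ) : ℂ) / n = (k:ℤ) * (2 * Real.pi * Complex.I) := by
    push_cast; field_simp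
  rw [this, Complex.exp_int_mul_two_pi_mul_I]

lemma cexpE_congr (n : ℕ) [NeZero n] {s t : ℤ} (h : s ≡ t [ZMOD n]) : cexpE n s = cexpE n t := by
  obtain ⟨k, hk⟩ := (Int.ModEq.dvd h : (n:ℤ) ∣ t - s)
  have ht : t = s + (n:ℤ) * k := by linarith
  rw [ht, cexpE_add, cexpE_mul_self, mul_one]

lemma cexpE_int_mul (n : ℕ) [NeZero n] (m : ℕ) (t : ℤ) : cexpE n (m * t) = (cexpE n t) ^ m := by
  induction m with
  | zero => simp [cexpE]
  | succ m ih => push_cast; rw [add_mul, one_mul, cexpE_add, ih, pow_succ]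

lemma cexpE_eq_one_iff (n : ℕ) [NeZero n] (t : ℤ) : cexpE n t = 1 ↔ (n:ℤ) ∣ t := by
  have hn : (n : ℂ) ≠ 0 := Nat.cast_ne_zero.mpr (NeZero.ne n)
  have hpi : (Real.pi:ℂ) ≠ 0 := by exact_mod_cast Real.pi_ne_zero
  rw [cexpE, Complex.exp_eq_one_iff]
  constructor
  · rintro ⟨k, hk⟩
    refine ⟨k, ?_⟩
    have h2 : (2:ℂ) * Real.pi * Complex.I ≠ 0 := by
      simp [hpi, Complex.I_ne_zero]
    have : (t : ℂ) = n * k := by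
      field_simp at hk
      have hk' : 2 * (Real.pi:ℂ) * Complex.I * t = 2 * Real.pi * Complex.I * (n * k) := by
        rw [hk]
      exact mul_left_cancel₀ h2 hk'
    exact_mod_cast this
  · rintro ⟨k, rfl⟩
    exact ⟨k, by push_cast; field_simp⟩

lemma cexpE_sum_orth (n : ℕ) [NeZero n] (z : ℤ) :
    ∑ m : Fin n, cexpE n (m.val * z) = if (n:ℤ) ∣ z then (n:ℂ) else 0 := by
  have hrw : ∀ m : Fin n, cexpE n (m.val * z) = (cexpE n z) ^ m.val := fun m => by
    rw [← cexpE_int_mul]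
  simp only [hrw]
  by_cases h : (n:ℤ) ∣ z
  · rw [if_pos h]
    have h1 : cexpE n z = 1 := (cexpE_eq_one_iff n z).mpr h
    simp [h1]
  · rw [if_neg h]
    have h1 : cexpE n z ≠ 1 := fun hc => h ((cexpE_eq_one_iff n z).mp hc)
    have hgeom := geom_sum_eq h1 n
    have hs : ∑ m : Fin n, (cexpE n z) ^ m.val = ∑ i ∈ Finset.range n, (cexpE n z) ^ i :=
      Fin.sum_univ_eq_sum_range (fun i => (cexpE n z) ^ i) n
    rw [hs, hgeom]
    have hpow : (cexpE n z) ^ n = 1 := by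
      rw [← cexpE_int_mul, (cexpE_eq_one_iff n _).mpr ⟨z, by ring⟩]
    rw [hpow, sub_self, zero_div]

lemma fin_sub_int_modEq (n : ℕ) [NeZero n] (a b : Fin n) :
    (((a - b : Fin n).val : ℤ)) ≡ (a.val : ℤ) - b.val [ZMOD n] := by
  have h : ((a - b).val) = (n - b.val + a.val) % n := by rw [Fin.sub_def]
  have hb : b.val < n := b.isLt
  unfold Int.ModEq
  rw [h]
  rw [Int.natCast_mod, Int.emod_emod_of_dvd _ dvd_rfl]
  have hs : ((n - b.val + a.val : ℕ) : ℤ) = ((a.val : ℤ) - b.val) + n := by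
    push_cast [Nat.cast_sub hb.le]; ring
  rw [hs]
  simpa using Int.add_mul_emod_self_left (a := (a.val:ℤ) - b.val) (b := (n:ℤ)) (c := 1)

lemma cexpE_conj (n : ℕ) (t : ℤ) : (starRingEnd ℂ) (cexpE n t) = cexpE n (-t) := by
  rw [cexpE, cexpE, ← Complex.exp_conj]
  congr 1
  simp only [map_div₀, _root_.map_mul, Complex.conj_I, Complex.conj_ofReal, map_ofNat,
    map_intCast, map_natCast]
  push_cast
  ring

lemma dftF_eq_cexpE (n : ℕ) (j k : Fin n) : dftF n j k = cexpE n (-(j.val * k.val)) := by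
  rw [dftF, cexpE]
  congr 1
  push_cast
  ring

lemma fin_dvd_iff (n : ℕ) [NeZero n] (s t k : Fin n) :
    (n:ℤ) ∣ ((t.val:ℤ) - s.val - k.val) ↔ k = t - s := by
  have hmod := fin_sub_int_modEq n t s
  have h1 : ((n:ℤ) ∣ ((t.val:ℤ) - s.val - k.val)) ↔ ((k.val:ℤ) ≡ ((t.val:ℤ) - s.val) [ZMOD n]) :=
    Iff.symm Int.modEq_iff_dvd
  rw [h1]
  constructor
  · intro h
    have h2 : (k.val:ℤ) ≡ (((t-s : Fin n).val:ℤ)) [ZMOD n] := h.trans hmod.symm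
    unfold Int.ModEq at h2
    rw [Int.emod_eq_of_lt (by positivity) (by exact_mod_cast k.isLt),
      Int.emod_eq_of_lt (by positivity) (by exact_mod_cast (t-s : Fin n).isLt)] at h2
    exact Fin.ext (by exact_mod_cast h2)
  · rintro rfl
    exact hmod



set_option maxHeartbeats 1000000 in
lemma lp_claim (n : ℕ) [NeZero n] (x v : Fin n → ℝ) :
    ∑ m : Fin n, (∑ k, dftF n m k * (x k : ℂ)) *
      ((∑ r, (v r : ℂ) * cexpE n ((m.val:ℤ) * r.val)) *
        (starRingEnd ℂ) (∑ r, (v r : ℂ) * cexpE n ((m.val:ℤ) * r.val)))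
    = (n:ℂ) * ∑ s, ∑ r, (v s : ℂ) * (v r : ℂ) * (x (r - s) : ℂ) := by
  have hconjc : ∀ m : Fin n, (starRingEnd ℂ) (∑ r, (v r : ℂ) * cexpE n ((m.val:ℤ) * r.val))
      = ∑ s, (v s : ℂ) * cexpE n (-((m.val:ℤ) * s.val)) := by
    intro m
    rw [map_sum]
    refine Finset.sum_congr rfl (fun r _ => ?_)
    rw [_root_.map_mul, Complex.conj_ofReal, cexpE_conj]
  have expand : ∀ m : Fin n, (∑ k, dftF n m k * (x k : ℂ)) *
      ((∑ r, (v r : ℂ) * cexpE n ((m.val:ℤ) * r.val)) *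
        (starRingEnd ℂ) (∑ r, (v r : ℂ) * cexpE n ((m.val:ℤ) * r.val)))
      = ∑ k, ∑ r, ∑ s, (x k : ℂ) * v r * v s *
          cexpE n ((m.val:ℤ) * ((r.val:ℤ) - s.val - k.val)) := by
    intro m
    rw [hconjc, Finset.sum_mul_sum, Finset.sum_mul]
    refine Finset.sum_congr rfl (fun k _ => ?_)
    rw [Finset.mul_sum]
    refine Finset.sum_congr rfl (fun r _ => ?_)
    rw [Finset.mul_sum]
    refine Finset.sum_congr rfl (fun s _ => ?_)
    rw [dftF_eq_cexpE]
    rw [show ((m.val:ℤ) * ((r.val:ℤ) - s.val - k.val))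
        = (-((m.val:ℤ) * k.val) + ((m.val:ℤ) * r.val + -((m.val:ℤ) * s.val))) by ring]
    rw [cexpE_add, cexpE_add]
    push_cast
    ring
  calc ∑ m : Fin n, (∑ k, dftF n m k * (x k : ℂ)) *
      ((∑ r, (v r : ℂ) * cexpE n ((m.val:ℤ) * r.val)) *
        (starRingEnd ℂ) (∑ r, (v r : ℂ) * cexpE n ((m.val:ℤ) * r.val)))
      = ∑ m : Fin n, ∑ k, ∑ r, ∑ s, (x k : ℂ) * v r * v s *
          cexpE n ((m.val:ℤ) * ((r.val:ℤ) - s.val - k.val)) :=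
        Finset.sum_congr rfl (fun m _ => expand m)
    _ = ∑ k : Fin n, ∑ r : Fin n, ∑ s : Fin n, (x k : ℂ) * v r * v s *
          (if (n:ℤ) ∣ ((r.val:ℤ) - s.val - k.val) then (n:ℂ) else 0) := by
        rw [Finset.sum_comm]
        refine Finset.sum_congr rfl (fun k _ => ?_)
        rw [Finset.sum_comm]
        refine Finset.sum_congr rfl (fun r _ => ?_)
        rw [Finset.sum_comm]
        refine Finset.sum_congr rfl (fun s _ => ?_)
        rw [← Finset.mul_sum, cexpE_sum_orth]
    _ = ∑ r : Fin n, ∑ s : Fin n, (x (r - s) : ℂ) * v r * v s * n := by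
        rw [Finset.sum_comm]
        refine Finset.sum_congr rfl (fun r _ => ?_)
        rw [Finset.sum_comm]
        refine Finset.sum_congr rfl (fun s _ => ?_)
        have hrw : ∀ k : Fin n, (x k : ℂ) * v r * v s *
            (if (n:ℤ) ∣ ((r.val:ℤ) - s.val - k.val) then (n:ℂ) else 0)
            = if k = r - s then (x k : ℂ) * v r * v s * n else 0 := by
          intro k
          by_cases h : k = r - s
          · rw [if_pos h, if_pos ((fin_dvd_iff n s r k).mpr h)]
          · rw [if_neg h, if_neg (fun hc => h ((fin_dvd_iff n s r k).mp hc)), mul_zero]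
        simp only [hrw]
        rw [Finset.sum_ite_eq' Finset.univ (r - s) (fun k => (x k : ℂ) * v r * v s * n)]
        simp
    _ = (n:ℂ) * ∑ s, ∑ r, (v s : ℂ) * (v r : ℂ) * (x (r - s) : ℂ) := by
        rw [Finset.mul_sum, Finset.sum_comm]
        refine Finset.sum_congr rfl (fun s _ => ?_)
        rw [Finset.mul_sum]
        exact Finset.sum_congr rfl (fun r _ => by ring)


set_option maxHeartbeats 1600000 in
/-- For a circulant graph, the Lovász theta SDP equals the linear program:
maximize `∑ x i` subject to `x k = x (n - k)` for `k ≠ 0`, `x 0 = 1`, `F x ≥ 0`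
entrywise, and `x k = 0` whenever `(0, k)` is an edge. -/
theorem lovaszTheta_eq_lp {n : ℕ} [NeZero n] (G : SimpleGraph (Fin n))
    (hcirc : ∀ i j : Fin n, G.Adj i j ↔ G.Adj 0 (j - i)) :
    lovaszTheta G = sSup {t : ℝ | ∃ x : Fin n → ℝ,
      (∀ k : Fin n, k ≠ 0 → x k = x (-k)) ∧
      x 0 = 1 ∧
      (∀ j : Fin n, 0 ≤ (∑ k, dftF n j k * (x k : ℂ)).re ∧
        (∑ k, dftF n j k * (x k : ℂ)).im = 0) ∧
      (∀ k : Fin n, G.Adj 0 k → x k = 0) ∧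
      t = ∑ i, x i} := by
  have hn0 : (0:ℝ) < n := by exact_mod_cast Nat.pos_of_ne_zero (NeZero.ne n)
  unfold lovaszTheta
  congr 1
  ext t
  simp only [Set.mem_setOf_eq]
  constructor
  · -- SDP → LP
    rintro ⟨X, hPSD, htr, hedge, rfl⟩
    have hsymX : ∀ i j, X i j = X j i := fun i j => by simpa using (hPSD.1.apply i j).symm
    refine ⟨fun k => ∑ s, X s (s + k), ?_, ?_, ?_, ?_, ?_⟩
    · -- symmetry
      intro k _
      show (∑ s, X s (s + k)) = ∑ s, X s (s + -k)
      have h1 : ∑ s, X s (s + -k) = ∑ s : Fin n, X (s + k) s := by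
        refine Fintype.sum_equiv (Equiv.subRight k) _ _ (fun s => ?_)
        have e1 : s + -k = s - k := by abel
        have e2 : s - k + k = s := by abel
        simp only [Equiv.subRight_apply, e1, e2]
      rw [h1]
      exact Finset.sum_congr rfl (fun s _ => hsymX s (s + k))
    · -- x 0 = 1
      show (∑ s, X s (s + 0)) = 1
      simpa [Matrix.trace, Matrix.diag] using htr
    · -- Fourier nonneg
      intro j
      set u : Fin n → ℂ := fun s => cexpE n (-((j.val:ℤ) * s.val)) with hu
      have hconj : ∀ s, (starRingEnd ℂ) (u s) = cexpE n ((j.val:ℤ) * s.val) := fun s => by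
        rw [hu]; simp only [cexpE_conj, neg_neg]
      have key : (∑ k, dftF n j k * ((∑ s, X s (s + k) : ℝ) : ℂ))
          = ∑ s, ∑ r, ((starRingEnd ℂ) (u s) * u r) * (X s r : ℂ) := by
        calc (∑ k, dftF n j k * ((∑ s, X s (s + k) : ℝ) : ℂ))
            = ∑ k, ∑ s, dftF n j k * (X s (s + k) : ℂ) := by
              refine Finset.sum_congr rfl (fun k _ => ?_)
              push_cast
              rw [Finset.mul_sum]
          _ = ∑ s, ∑ k, dftF n j k * (X s (s + k) : ℂ) := Finset.sum_comm
          _ = ∑ s, ∑ r, dftF n j (r - s) * (X s r : ℂ) := by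
              refine Finset.sum_congr rfl (fun s _ => ?_)
              refine Fintype.sum_equiv (Equiv.addLeft s) _ _ (fun k => ?_)
              have e1 : (s + k) - s = k := by abel
              simp only [Equiv.coe_addLeft, e1]
          _ = ∑ s, ∑ r, ((starRingEnd ℂ) (u s) * u r) * (X s r : ℂ) := by
              refine Finset.sum_congr rfl (fun s _ => Finset.sum_congr rfl (fun r _ => ?_))
              congr 1
              rw [hconj, hu]
              simp only
              rw [← cexpE_add, dftF_eq_cexpE]
              refine cexpE_congr n ?_
              have h1 := ((fin_sub_int_modEq n r s).mul_left (j.val:ℤ)).neg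
              have e1 : -((j.val:ℤ) * ((r.val:ℤ) - s.val)) = (j.val:ℤ) * s.val + -((j.val:ℤ) * r.val) := by
                ring
              rw [e1] at h1
              exact_mod_cast h1
      have hterm_re : ∀ s r : Fin n, (((starRingEnd ℂ) (u s) * u r) * (X s r : ℂ)).re
          = ((u s).re * (u r).re + (u s).im * (u r).im) * X s r := by
        intro s r
        rw [Complex.mul_re, Complex.mul_re, Complex.mul_im, Complex.conj_re, Complex.conj_im,
          Complex.ofReal_re, Complex.ofReal_im]
        ring
      have hterm_im : ∀ s r : Fin n, (((starRingEnd ℂ) (u s) * u r) * (X s r : ℂ)).im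
          = ((u s).re * (u r).im - (u s).im * (u r).re) * X s r := by
        intro s r
        rw [Complex.mul_im, Complex.mul_re, Complex.mul_im, Complex.conj_re, Complex.conj_im,
          Complex.ofReal_re, Complex.ofReal_im]
        ring
      constructor
      · show 0 ≤ (∑ k, dftF n j k * ((∑ s, X s (s + k) : ℝ) : ℂ)).re
        rw [key, Complex.re_sum]
        simp only [Complex.re_sum, hterm_re]
        have hsplit : ∑ s, ∑ r, ((u s).re * (u r).re + (u s).im * (u r).im) * X s r
            = (∑ s, (u s).re * ∑ r, X s r * (u r).re) + (∑ s, (u s).im * ∑ r, X s r * (u r).im) := by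
          rw [← Finset.sum_add_distrib]
          refine Finset.sum_congr rfl (fun s _ => ?_)
          rw [Finset.mul_sum, Finset.mul_sum, ← Finset.sum_add_distrib]
          exact Finset.sum_congr rfl (fun r _ => by ring)
        rw [hsplit]
        have h1 := hPSD.dotProduct_mulVec_nonneg (fun s => (u s).re)
        have h2 := hPSD.dotProduct_mulVec_nonneg (fun s => (u s).im)
        simp only [dotProduct, Matrix.mulVec, Pi.star_apply, star_trivial] at h1 h2
        exact add_nonneg h1 h2
      · show (∑ k, dftF n j k * ((∑ s, X s (s + k) : ℝ) : ℂ)).im = 0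
        rw [key, Complex.im_sum]
        simp only [Complex.im_sum, hterm_im]
        have h1 : ∑ s, ∑ r, ((u s).re * (u r).im - (u s).im * (u r).re) * X s r
            = (∑ s, ∑ r, (u s).re * (u r).im * X s r)
              - (∑ s, ∑ r, (u s).im * (u r).re * X s r) := by
          rw [← Finset.sum_sub_distrib]
          refine Finset.sum_congr rfl (fun s _ => ?_)
          rw [← Finset.sum_sub_distrib]
          exact Finset.sum_congr rfl (fun r _ => by ring)
        have h2 : (∑ s, ∑ r, (u s).im * (u r).re * X s r)
            = ∑ s, ∑ r, (u s).re * (u r).im * X s r := by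
          rw [Finset.sum_comm]
          exact Finset.sum_congr rfl (fun r _ => Finset.sum_congr rfl (fun s _ => by
            rw [hsymX s r]; ring))
        rw [h1, h2, sub_self]
    · -- edges
      intro k hadj
      refine Finset.sum_eq_zero (fun s _ => ?_)
      refine hedge s (s + k) ?_
      rw [hcirc s (s + k)]
      have e1 : (s + k) - s = k := by abel
      rwa [e1]
    · -- value
      show (∑ i, ∑ j, X i j) = ∑ k, ∑ s, X s (s + k)
      have hcomm : (∑ k : Fin n, ∑ s : Fin n, X s (s + k))
          = ∑ s : Fin n, ∑ k : Fin n, X s (s + k) := Finset.sum_comm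
      rw [hcomm]
      refine Finset.sum_congr rfl (fun s _ => ?_)
      exact (Fintype.sum_equiv (Equiv.addLeft s) (fun k => X s (s + k)) (fun j => X s j)
        (fun k => rfl)).symm
  · -- LP → SDP
    rintro ⟨x, hsym, hx0, hF, hedge, rfl⟩
    have hnC : (n:ℂ) ≠ 0 := Nat.cast_ne_zero.mpr (NeZero.ne n)
    refine ⟨fun i j => x (j - i) / n, Matrix.PosSemidef.of_dotProduct_mulVec_nonneg ?_ ?_, ?_, ?_, ?_⟩
    · -- Hermitian
      show Matrix.conjTranspose _ = _
      ext i j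
      show star (x (i - j) / n) = x (j - i) / n
      rw [star_trivial]
      by_cases hij : i = j
      · subst hij; rfl
      · have h1 : j - i ≠ 0 := sub_ne_zero.mpr (fun h => hij (by exact h.symm))
        rw [hsym _ h1]
        congr 2
        abel
    · -- PSD quadratic form
      intro v
      have claim := lp_claim n x v
      have hre : 0 ≤ ((n:ℂ) * ∑ s, ∑ r, (v s : ℂ) * (v r : ℂ) * (x (r - s) : ℂ)).re := by
        rw [← claim, Complex.re_sum]
        refine Finset.sum_nonneg (fun m _ => ?_)
        rw [Complex.mul_conj]
        have him : (∑ k, dftF n m k * (x k : ℂ)).im = 0 := (hF m).2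
        have hrepos : 0 ≤ (∑ k, dftF n m k * (x k : ℂ)).re := (hF m).1
        rw [Complex.mul_re]
        simp only [Complex.ofReal_re, Complex.ofReal_im, him, mul_zero, zero_mul, sub_zero]
        exact mul_nonneg hrepos (Complex.normSq_nonneg _)
      have hcast : ((n:ℂ) * ∑ s, ∑ r, (v s : ℂ) * (v r : ℂ) * (x (r - s) : ℂ))
          = (((n:ℝ) * ∑ s, ∑ r, v s * v r * x (r - s) : ℝ) : ℂ) := by push_cast; ring
      rw [hcast, Complex.ofReal_re] at hre
      have hS : 0 ≤ ∑ s, ∑ r, v s * v r * x (r - s) := by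
        by_contra hcon
        push_neg at hcon
        nlinarith
      have hq : dotProduct (star v) ((fun i j => x (j - i) / n) *ᵥ v)
          = (∑ s, ∑ r, v s * v r * x (r - s)) / n := by
        simp only [dotProduct, Matrix.mulVec, Pi.star_apply, star_trivial]
        rw [Finset.sum_div]
        refine Finset.sum_congr rfl (fun s _ => ?_)
        rw [Finset.sum_div, Finset.mul_sum]
        refine Finset.sum_congr rfl (fun r _ => ?_)
        ring
      rw [hq]
      exact div_nonneg hS hn0.le
    · -- trace
      show (∑ i, x (i - i) / n) = 1
      have hdiag : ∀ i : Fin n, x (i - i) / n = 1 / n := fun i => by rw [sub_self, hx0]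
      simp only [hdiag]
      rw [Finset.sum_const, Finset.card_univ, Fintype.card_fin, nsmul_eq_mul]
      field_simp
    · -- edges
      intro i j hadj
      have h0 : G.Adj 0 (j - i) := (hcirc i j).mp hadj
      show x (j - i) / n = 0
      rw [hedge _ h0, zero_div]
    · -- value
      show (∑ i, x i) = ∑ i, ∑ j, x (j - i) / n
      have hinner : ∀ i : Fin n, (∑ j, x (j - i)) = ∑ k, x k := fun i =>
        Fintype.sum_equiv (Equiv.subRight i) (fun j => x (j - i)) x (fun j => rfl)
      calc ∑ i, x i = ∑ i : Fin n, (∑ k, x k) / n := by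
            rw [Finset.sum_const, Finset.card_univ, Fintype.card_fin, nsmul_eq_mul]
            field_simp
        _ = ∑ i, ∑ j, x (j - i) / n := by
            refine Finset.sum_congr rfl (fun i _ => ?_)
            rw [← hinner i, Finset.sum_div]
end
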